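/- arXiv:2305.03208 — 9 statements merged into one kernel-verified Lean document; each statement's English description precedes it below -/
import Mathlib

section
/- If f : X → ℝ∪{+∞} is a function on a metric space, x ∈ dom f, and 0 < g(x) < +∞ where g = f - inf f, and φ : ℝ≥0 → ℝ≥0 is continuous with φ(0)=0 and continuously differentiable with positive derivative on (0,∞), then the slope of φ∘g at x equals φ'(g(x)) times the slope of g at x. -/
open Filter Topology

/-- The (metric) slope of `f` at `x`: the infimum of those `ε > 0` for which `x`
locally minimizes `f + ε · d(x,·)`; it is `+∞` where `f x = ⊤`. -/
noncomputable def mSlope {X : Type*} [MetricSpace X] (f : X → EReal) (x : X) : EReal :=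
  if f x = ⊤ then ⊤ else
    sInf {e : EReal | ∃ ε : ℝ, 0 < ε ∧ e = (ε : EReal) ∧
      ∀ᶠ y in nhds x, f x ≤ f y + ((ε * dist x y : ℝ) : EReal)}

private lemma aux_mvt (φ φ' : ℝ → ℝ) (hφc : ContinuousOn φ (Set.Ici 0))
    (hφd : ∀ t > (0 : ℝ), HasDerivAt φ (φ' t) t) (a b : ℝ) (ha : 0 ≤ a) (hab : a < b) :
    ∃ ξ ∈ Set.Ioo a b, φ b - φ a = φ' ξ * (b - a) := by
  obtain ⟨ξ, hξ, h⟩ := exists_hasDerivAt_eq_slope φ φ' hab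
    (hφc.mono (fun t ht => le_trans ha ht.1))
    (fun t ht => hφd t (lt_of_le_of_lt ha ht.1))
  exact ⟨ξ, hξ, by rw [h, div_mul_cancel₀ _ (sub_ne_zero_of_ne hab.ne')]⟩

private lemma aux_sInf_chain (P Q : ℝ → Prop) (c : ℝ) (hc : 0 < c)
    (h1 : ∀ δ > (0:ℝ), ∀ ε > (0:ℝ), P ε → Q ((c + δ) * ε))
    (h2 : ∀ δ : ℝ, 0 < δ → δ < c → ∀ ε > (0:ℝ), Q ε → P (ε / (c - δ))) :
    sInf {e : EReal | ∃ ε : ℝ, 0 < ε ∧ e = (ε : EReal) ∧ Q ε}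
      = (c : EReal) * sInf {e : EReal | ∃ ε : ℝ, 0 < ε ∧ e = (ε : EReal) ∧ P ε} := by
  set S := {e : EReal | ∃ ε : ℝ, 0 < ε ∧ e = (ε : EReal) ∧ P ε} with hSdef
  set T := {e : EReal | ∃ ε : ℝ, 0 < ε ∧ e = (ε : EReal) ∧ Q ε} with hTdef
  have hS0 : ∀ e ∈ S, (0 : EReal) ≤ e := by
    rintro e ⟨ε, hε, rfl, -⟩; exact_mod_cast hε.le
  have hSnn : (0 : EReal) ≤ sInf S := le_sInf hS0
  apply le_antisymm
  · rcases eq_or_ne (sInf S) ⊤ with hS | hS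
    · rw [hS, EReal.coe_mul_top_of_pos hc]; exact le_top
    · have hSb : sInf S ≠ ⊥ := fun h => by simp [h] at hSnn
      obtain ⟨s, hs⟩ : ∃ s : ℝ, sInf S = (s : EReal) :=
        ⟨(sInf S).toReal, (EReal.coe_toReal hS hSb).symm⟩
      have hs0 : (0 : ℝ) ≤ s := by rw [hs] at hSnn; exact_mod_cast hSnn
      rw [hs, ← EReal.coe_mul]
      by_contra hcon
      push_neg at hcon
      obtain ⟨z, hz1, hz2⟩ := exists_between hcon
      obtain ⟨w, rfl⟩ : ∃ w : ℝ, z = (w : EReal) :=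
        ⟨z.toReal, (EReal.coe_toReal (ne_top_of_lt hz2) (ne_bot_of_gt hz1)).symm⟩
      have hw1 : c * s < w := by exact_mod_cast hz1
      set η := w - c * s with hηdef
      have hη : 0 < η := by simp [hηdef]; linarith
      set δ := η / (2 * (s + 1)) with hδdef
      have hδ : 0 < δ := by positivity
      set η₂ := min 1 (η / (2 * (c + δ))) with hη₂def
      have hη₂ : 0 < η₂ := lt_min one_pos (by positivity)
      have hlt : sInf S < ((s + η₂ : ℝ) : EReal) := by
        rw [hs]; exact_mod_cast (by linarith : s < s + η₂)
      obtain ⟨e, heS, he⟩ := sInf_lt_iff.mp hlt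
      obtain ⟨ε, hε, rfl, hP⟩ := heS
      have hεlt : ε < s + η₂ := by exact_mod_cast he
      have hQ := h1 δ hδ ε hε hP
      have hmem : (((c + δ) * ε : ℝ) : EReal) ∈ T :=
        ⟨(c + δ) * ε, by positivity, rfl, hQ⟩
      have hle := sInf_le hmem
      have hbound : (c + δ) * ε ≤ w := by
        have h1' : η₂ ≤ η / (2 * (c + δ)) := min_le_right _ _
        have h2' : (c + δ) * η₂ ≤ η / 2 := by
          have heq : (c + δ) * (η / (2 * (c + δ))) = η / 2 := by
            field_simp
          nlinarith [mul_le_mul_of_nonneg_left h1' (by positivity : (0:ℝ) ≤ c + δ)]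
        have h3' : δ * s ≤ η / 2 := by
          rw [hδdef]
          rw [div_mul_eq_mul_div, div_le_div_iff₀ (by positivity) (by norm_num)]
          nlinarith
        nlinarith [mul_le_mul_of_nonneg_left hεlt.le (by positivity : (0:ℝ) ≤ c + δ)]
      have : sInf T ≤ ((w : ℝ) : EReal) := hle.trans (by exact_mod_cast hbound)
      exact absurd (this.trans_lt hz2) (lt_irrefl _)
  · apply le_sInf
    rintro e ⟨ε, hε, rfl, hQ⟩
    have hmem : ∀ δ : ℝ, 0 < δ → δ < c → ((ε / (c - δ) : ℝ) : EReal) ∈ S := fun δ ha hb =>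
      ⟨ε / (c - δ), div_pos hε (by linarith), rfl, h2 δ ha hb ε hε hQ⟩
    have hSle : sInf S ≤ ((ε / (c - c/2) : ℝ) : EReal) :=
      sInf_le (hmem (c/2) (half_pos hc) (half_lt_self hc))
    have hS : sInf S ≠ ⊤ := ne_top_of_le_ne_top (EReal.coe_ne_top _) hSle
    have hSb : sInf S ≠ ⊥ := fun h => by simp [h] at hSnn
    obtain ⟨s, hs⟩ : ∃ s : ℝ, sInf S = (s : EReal) :=
      ⟨(sInf S).toReal, (EReal.coe_toReal hS hSb).symm⟩
    have hs0 : (0 : ℝ) ≤ s := by rw [hs] at hSnn; exact_mod_cast hSnn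
    rw [hs, ← EReal.coe_mul, EReal.coe_le_coe_iff]
    have hkey : ∀ δ : ℝ, 0 < δ → δ < c → s ≤ ε / (c - δ) := fun δ ha hb => by
      have := sInf_le (hmem δ ha hb); rw [hs] at this; exact_mod_cast this
    by_contra hcon
    push_neg at hcon
    have hspos : 0 < s := by nlinarith
    set δ := min (c/2) ((c * s - ε) / (2 * s)) with hδdef
    have hδpos : 0 < δ := lt_min (half_pos hc) (div_pos (by linarith) (by linarith))
    have hδle : δ ≤ c / 2 := min_le_left _ _
    have hδc : δ < c := lt_of_le_of_lt hδle (half_lt_self hc)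
    have hcd : 0 < c - δ := by linarith
    have hsle := hkey δ hδpos hδc
    rw [le_div_iff₀ hcd] at hsle
    have hδle2 : δ ≤ (c * s - ε) / (2 * s) := min_le_right _ _
    have heq : s * ((c * s - ε) / (2 * s)) = (c * s - ε) / 2 := by
      field_simp
    nlinarith [mul_le_mul_of_nonneg_left hδle2 hspos.le]

/-- Chain rule for the slope: if `g = f - inf f` is the gap, `0 < g x < ∞`, and `φ` is a
desingularizer (continuous on `[0,∞)`, `φ 0 = 0`, continuously differentiable with strictly
positive derivative `φ'` on `(0,∞)`), then the slope of `φ ∘ g` at `x` equals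
`φ' (g x)` times the slope of `g` at `x`. -/
theorem slope_chain_rule {X : Type*} [MetricSpace X] (f : X → EReal)
    (φ φ' : ℝ → ℝ)
    (hφc : ContinuousOn φ (Set.Ici 0)) (hφ0 : φ 0 = 0)
    (hφd : ∀ t > (0 : ℝ), HasDerivAt φ (φ' t) t)
    (hφ'c : ContinuousOn φ' (Set.Ioi 0))
    (hφ'pos : ∀ t > (0 : ℝ), 0 < φ' t)
    (x : X) (hx : f x ≠ ⊤)
    (hgap_pos : 0 < f x - sInf (Set.range f))
    (hgap_fin : f x - sInf (Set.range f) < ⊤) :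
    mSlope (fun y =>
        if f y - sInf (Set.range f) = ⊤ then (⊤ : EReal)
        else ((φ ((f y - sInf (Set.range f)).toReal) : ℝ) : EReal)) x
      = ((φ' ((f x - sInf (Set.range f)).toReal) : ℝ) : EReal) *
          mSlope (fun y => f y - sInf (Set.range f)) x := by
  classical
  set μ := sInf (Set.range f) with hμdef
  have hμ_le : ∀ y, μ ≤ f y := fun y => sInf_le (Set.mem_range_self y)
  have hfx_ne_bot : f x ≠ ⊥ := by
    intro h
    have hμb : μ = ⊥ := le_bot_iff.mp (h ▸ hμ_le x)
    rw [h, hμb] at hgap_pos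
    simp [sub_eq_add_neg] at hgap_pos
  obtain ⟨a, ha⟩ : ∃ a : ℝ, f x = (a : EReal) :=
    ⟨(f x).toReal, (EReal.coe_toReal hx hfx_ne_bot).symm⟩
  have hμ_ne_top : μ ≠ ⊤ := fun h => hx (top_le_iff.mp (h ▸ hμ_le x))
  have hμ_ne_bot : μ ≠ ⊥ := by
    intro h
    rw [ha, h] at hgap_fin
    simp [sub_eq_add_neg] at hgap_fin
  obtain ⟨m, hm⟩ : ∃ m : ℝ, μ = (m : EReal) :=
    ⟨μ.toReal, (EReal.coe_toReal hμ_ne_top hμ_ne_bot).symm⟩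
  have hfxμ : f x - μ = ((a - m : ℝ) : EReal) := by
    rw [ha, hm]; exact_mod_cast rfl
  set gx := a - m with hgxdef
  have hgx : 0 < gx := by
    rw [hfxμ] at hgap_pos; exact_mod_cast hgap_pos
  set c := φ' gx with hcdef
  have hc : 0 < c := hφ'pos gx hgx
  -- description of the gap function
  have key : ∀ y, (f y - μ = ⊤) ∨ ∃ b : ℝ, 0 ≤ b ∧ f y - μ = (b : EReal) := by
    intro y
    by_cases hyt : f y = ⊤
    · left; rw [hyt, hm]; simp
    · right
      have hyb : f y ≠ ⊥ := by
        intro h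
        have := hμ_le y
        rw [h, hm] at this
        exact absurd this (by simp)
      obtain ⟨b', hb'⟩ : ∃ b' : ℝ, f y = (b' : EReal) :=
        ⟨(f y).toReal, (EReal.coe_toReal hyt hyb).symm⟩
      refine ⟨b' - m, ?_, by rw [hb', hm]; exact_mod_cast rfl⟩
      have := hμ_le y
      rw [hb', hm, EReal.coe_le_coe_iff] at this
      linarith
  -- monotonicity of φ
  have hmono : StrictMonoOn φ (Set.Ici 0) := by
    apply strictMonoOn_of_deriv_pos (convex_Ici 0) hφc
    intro t ht
    rw [interior_Ici] at ht
    rw [(hφd t ht).deriv]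
    exact hφ'pos t ht
  have hmvt : ∀ b : ℝ, 0 ≤ b → b < gx → ∃ ξ ∈ Set.Ioo b gx, φ gx - φ b = φ' ξ * (gx - b) :=
    fun b hb hbg => aux_mvt φ φ' hφc hφd b gx hb hbg
  have hca : ContinuousAt φ' gx := hφ'c.continuousAt (Ioi_mem_nhds hgx)
  have hne1 : (fun y => if f y - μ = ⊤ then (⊤ : EReal)
      else ((φ ((f y - μ).toReal) : ℝ) : EReal)) x ≠ ⊤ := by
    simp only [hfxμ, EReal.coe_ne_top, if_false]
    exact EReal.coe_ne_top _
  have hne2 : (fun y => f y - μ) x ≠ ⊤ := by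
    simp only [hfxμ]; exact EReal.coe_ne_top _
  rw [mSlope, if_neg hne1, mSlope, if_neg hne2]
  simp only [hfxμ, EReal.coe_ne_top, if_false, EReal.toReal_coe]
  refine aux_sInf_chain _ _ c hc ?_ ?_
  · -- claim 1
    intro δ hδ ε hε hev
    obtain ⟨r₁, hr₁, hball⟩ := Metric.continuousAt_iff.mp hca δ hδ
    set r := min r₁ (gx/2) with hrdef
    have hrpos : 0 < r := lt_min hr₁ (by linarith)
    have hrr₁ : r ≤ r₁ := min_le_left _ _
    have hd : ∀ᶠ y in nhds x, dist x y < r / ε := by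
      filter_upwards [Metric.ball_mem_nhds x (div_pos hrpos hε)] with y hy
      rw [dist_comm]; exact hy
    filter_upwards [hev, hd] with y hy hdy
    rcases key y with hyt | ⟨b, hb0, hyb⟩
    · rw [hyt, if_pos (rfl : (⊤:EReal) = ⊤), EReal.top_add_coe]
      exact le_top
    · rw [hyb] at hy ⊢
      simp only [EReal.coe_ne_top, if_false, EReal.toReal_coe]
      rw [← EReal.coe_add, EReal.coe_le_coe_iff] at hy ⊢
      have hd0 : 0 ≤ dist x y := dist_nonneg
      rcases le_or_gt gx b with hgb | hbg
      · have hmle : φ gx ≤ φ b :=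
          hmono.monotoneOn (Set.mem_Ici.mpr hgx.le) (Set.mem_Ici.mpr hb0) hgb
        nlinarith [mul_nonneg (mul_nonneg (by linarith : (0:ℝ) ≤ c + δ) hε.le) hd0]
      · obtain ⟨ξ, hξ, hmeq⟩ := hmvt b hb0 hbg
        have hεd : ε * dist x y < r := by
          calc ε * dist x y < ε * (r / ε) := by gcongr
          _ = r := by field_simp
        have hξnear : dist ξ gx < r₁ := by
          rw [Real.dist_eq, abs_lt]
          constructor
          · have : gx - r < b := by linarith
            linarith [hξ.1]
          · linarith [hξ.2]
        have hφξ : φ' ξ < c + δ := by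
          have h' := hball hξnear
          rw [Real.dist_eq, abs_lt] at h'
          have hcc : c = φ' gx := hcdef
          linarith [h'.2]
        have h1 : gx - b ≤ ε * dist x y := by linarith
        have h2 : φ gx - φ b ≤ (c + δ) * (gx - b) := by
          rw [hmeq]
          exact mul_le_mul_of_nonneg_right hφξ.le (by linarith)
        have h3 : (c + δ) * (gx - b) ≤ (c + δ) * (ε * dist x y) :=
          mul_le_mul_of_nonneg_left h1 (by linarith)
        have h4 := mul_assoc (c + δ) ε (dist x y)
        linarith
  · -- claim 2
    intro δ hδpos hδc ε hε hev
    obtain ⟨r₁, hr₁, hball⟩ := Metric.continuousAt_iff.mp hca δ hδpos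
    set r := min r₁ gx with hrdef
    have hrpos : 0 < r := lt_min hr₁ hgx
    have hrgx : r ≤ gx := min_le_right _ _
    have hrr₁ : r ≤ r₁ := min_le_left _ _
    have hgr2 : 0 < gx - r / 2 := by linarith
    set ρ := φ gx - φ (gx - r / 2) with hρdef
    have hρpos : 0 < ρ :=
      sub_pos.mpr (hmono (Set.mem_Ici.mpr hgr2.le) (Set.mem_Ici.mpr hgx.le) (by linarith))
    have hd : ∀ᶠ y in nhds x, ε * dist x y < ρ := by
      filter_upwards [Metric.ball_mem_nhds x (div_pos hρpos hε)] with y hy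
      rw [Metric.mem_ball, dist_comm] at hy
      calc ε * dist x y < ε * (ρ / ε) := by gcongr
      _ = ρ := by field_simp
    filter_upwards [hev, hd] with y hy hdy
    rcases key y with hyt | ⟨b, hb0, hyb⟩
    · rw [hyt, EReal.top_add_coe]
      exact le_top
    · rw [hyb] at hy ⊢
      simp only [EReal.coe_ne_top, if_false, EReal.toReal_coe] at hy
      rw [← EReal.coe_add, EReal.coe_le_coe_iff] at hy ⊢
      have hd0 : 0 ≤ dist x y := dist_nonneg
      have hcd : 0 < c - δ := by linarith
      rcases le_or_gt gx b with hgb | hbg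
      · nlinarith [mul_nonneg (div_nonneg hε.le hcd.le) hd0]
      · rw [hρdef] at hdy
        have hφb : φ (gx - r / 2) < φ b := by linarith
        have hbr : gx - r / 2 < b := by
          by_contra hcon2
          push_neg at hcon2
          have := hmono.monotoneOn (Set.mem_Ici.mpr hb0) (Set.mem_Ici.mpr hgr2.le) hcon2
          linarith
        obtain ⟨ξ, hξ, hmeq⟩ := hmvt b hb0 hbg
        have hξnear : dist ξ gx < r₁ := by
          rw [Real.dist_eq, abs_lt]
          exact ⟨by linarith [hξ.1], by linarith [hξ.2]⟩
        have hφξ : c - δ < φ' ξ := by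
          have h' := hball hξnear
          rw [Real.dist_eq, abs_lt] at h'
          have hcc : c = φ' gx := hcdef
          linarith [h'.1]
        have h2 : (c - δ) * (gx - b) ≤ φ gx - φ b := by
          rw [hmeq]
          exact mul_le_mul_of_nonneg_right hφξ.le (by linarith)
        have h3 : gx - b ≤ ε * dist x y / (c - δ) := by
          rw [le_div_iff₀ hcd]; nlinarith
        have heq4 : ε * dist x y / (c - δ) = ε / (c - δ) * dist x y := by ring
        linarith [heq4 ▸ h3]
end

section
/- Let X be a metric space and f : X → ℝ∪{+∞} lower semicontinuous, proper, bounded below, satisfying the KL property for minimization with desingularizer φ. Let (x_k) be a sequence satisfying f(x_{k-1}) - f(x_k) ≥ δ·(limiting slope of f at x_k)² for some δ > 0, with f(x_0) sufficiently close to inf f. Then f(x_k) decreases monotonically to inf f. -/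
/-!
By the descent inequality the values `f (x k)` decrease, hence converge to their infimum `l`.
If `l > inf f`, all gaps `f (x k) - inf f` stay in a compact band `[η, ρ] ⊂ (0, ∞)` on which the
continuous `φ'` is bounded by some `M`; the KL inequality then bounds the limiting slopes below by
`1 / M`, so every step lowers `f` by at least `δ / M²`, and the values would eventually drop
below `l`.
-/

open Filter Topology

/-- The limiting slope of `f` at `x`: the liminf of slopes over `y → x` with `f y → f x`. -/
noncomputable def mLimSlope {X : Type*} [MetricSpace X] (f : X → EReal) (x : X) : EReal :=
  Filter.liminf (fun y => mSlope f y) ((nhds x) ⊓ Filter.comap f (nhds (f x)))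

lemma mSlope_nonneg {X : Type*} [MetricSpace X] (f : X → EReal) (x : X) :
    0 ≤ mSlope f x := by
  unfold mSlope
  split
  · exact le_top
  · refine le_sInf ?_
    rintro e ⟨ε, hε, rfl, -⟩
    exact_mod_cast hε.le

lemma mLimSlope_nonneg {X : Type*} [MetricSpace X] (f : X → EReal) (x : X) :
    0 ≤ mLimSlope f x :=
  le_liminf_of_le (by isBoundedDefault) (.of_forall fun y => mSlope_nonneg f y)

namespace EReal

lemma antitone_of_add_le {u v : ℕ → EReal} (hv : ∀ k, 0 ≤ v k) (h : ∀ k, u (k + 1) + v k ≤ u k) :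
    Antitone u :=
  antitone_nat_of_succ_le fun k => (le_add_of_nonneg_right (hv k)).trans (h k)

lemma add_nat_mul_le_of_add_le {u : ℕ → EReal} {q : ℝ} (h : ∀ k, u (k + 1) + q ≤ u k) (k : ℕ) :
    u k + (k * q : ℝ) ≤ u 0 := by
  induction k with
  | zero => simp
  | succ k ih =>
    calc u (k + 1) + ((k + 1 : ℕ) * q : ℝ) = u (k + 1) + q + (k * q : ℝ) := by
          rw [add_assoc, ← coe_add]; congr 2; push_cast; ring
      _ ≤ u k + (k * q : ℝ) := by gcongr; exact h k
      _ ≤ u 0 := ih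

lemma exists_lt_of_add_le {u : ℕ → EReal} {q : ℝ} (hq : 0 < q) (h : ∀ k, u (k + 1) + q ≤ u k)
    (h0 : u 0 ≠ ⊤) (b : ℝ) : ∃ k, u k < b := by
  obtain ⟨R, hR, -⟩ := lt_iff_exists_real_btwn.1 (lt_top_iff_ne_top.2 h0)
  obtain ⟨k, hk⟩ := exists_nat_gt ((R - b) / q)
  refine ⟨k, lt_of_not_ge fun hbk => hR.not_ge ?_⟩
  calc (R : EReal) ≤ (b + k * q : ℝ) := by
        rw [div_lt_iff₀ hq] at hk; exact_mod_cast by linarith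
    _ = (b : EReal) + (k * q : ℝ) := coe_add _ _
    _ ≤ u k + (k * q : ℝ) := by gcongr
    _ ≤ u 0 := add_nat_mul_le_of_add_le h k

end EReal

lemma exists_pos_le_mLimSlope_of_KL {X : Type*} [MetricSpace X] {f : X → EReal} {φ' : ℝ → ℝ}
    (hφ'c : ContinuousOn φ' (Set.Ioi 0)) {m ρ : ℝ}
    (hKL : ∀ x, 0 < f x - m → f x - m < (ρ : EReal) →
      (1 : EReal) ≤ ((φ' ((f x - m).toReal) : ℝ) : EReal) * mLimSlope f x)
    {r : ℝ} (hmr : m < r) :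
    ∃ c > (0 : ℝ), ∀ x, (r : EReal) ≤ f x → f x < (m + ρ : ℝ) → (c : EReal) ≤ mLimSlope f x := by
  obtain ⟨C, hC⟩ := isCompact_Icc.exists_bound_of_continuousOn
    (hφ'c.mono fun t ht => (sub_pos.2 hmr).trans_le ht.1 : ContinuousOn φ' (Set.Icc (r - m) ρ))
  set M := max C 1
  have hM : 0 < M := lt_max_of_lt_right one_pos
  refine ⟨M⁻¹, inv_pos.2 hM, fun x hrx hxρ => ?_⟩
  obtain ⟨y, hy⟩ : ∃ y : ℝ, f x = y :=
    ⟨_, (EReal.coe_toReal (ne_top_of_lt hxρ) (ne_bot_of_le_ne_bot (EReal.coe_ne_bot r) hrx)).symm⟩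
  rw [hy] at hrx hxρ
  have hry : r ≤ y := EReal.coe_le_coe_iff.1 hrx
  have hyρ : y < m + ρ := EReal.coe_lt_coe_iff.1 hxρ
  have hgap : f x - m = ((y - m : ℝ) : EReal) := by rw [hy, EReal.coe_sub]
  have hKLx := hKL x (by rw [hgap]; exact_mod_cast (by linarith : 0 < y - m))
    (by rw [hgap]; exact_mod_cast (by linarith : y - m < ρ))
  rw [hgap, EReal.toReal_coe] at hKLx
  have hφ'M : φ' (y - m) ≤ M :=
    (le_abs_self _).trans <| (hC _ ⟨by linarith, by linarith⟩).trans (le_max_left _ _)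
  obtain hL | hL := eq_or_ne (mLimSlope f x) ⊤
  · exact hL ▸ le_top
  obtain ⟨ℓ, hℓ⟩ : ∃ ℓ : ℝ, mLimSlope f x = ℓ :=
    ⟨_, (EReal.coe_toReal hL (ne_bot_of_le_ne_bot EReal.zero_ne_bot (mLimSlope_nonneg f x))).symm⟩
  have hℓ0 : 0 ≤ ℓ := by exact_mod_cast hℓ ▸ mLimSlope_nonneg f x
  rw [hℓ, ← EReal.coe_mul] at hKLx
  rw [hℓ, EReal.coe_le_coe_iff, inv_le_iff_one_le_mul₀ hM]
  calc 1 ≤ φ' (y - m) * ℓ := by exact_mod_cast hKLx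
    _ ≤ ℓ * M := by rw [mul_comm ℓ]; gcongr

theorem value_convergence_general {X : Type*} [MetricSpace X] (f : X → EReal)
    (φ' : ℝ → ℝ) (hφ'c : ContinuousOn φ' (Set.Ioi 0))
    (ρ : ℝ) (hρ : 0 < ρ)
    (hKL : ∀ x : X, 0 < f x - sInf (Set.range f) → f x - sInf (Set.range f) < (ρ : EReal) →
      (1 : EReal) ≤ ((φ' ((f x - sInf (Set.range f)).toReal) : ℝ) : EReal) * mLimSlope f x)
    (δ : ℝ) (hδ : 0 < δ) :
    ∃ ε > (0 : ℝ), ∀ x : ℕ → X,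
      (∀ k : ℕ, f (x (k+1)) + (δ : EReal) * (mLimSlope f (x (k+1)) * mLimSlope f (x (k+1)))
          ≤ f (x k)) →
      f (x 0) < sInf (Set.range f) + (ε : EReal) →
      (∀ k : ℕ, f (x (k+1)) ≤ f (x k)) ∧
        Tendsto (fun k => f (x k)) atTop (nhds (sInf (Set.range f))) := by
  set m := sInf (Set.range f)
  refine ⟨ρ, hρ, fun x hdesc hinit => ?_⟩
  have hanti : Antitone (fun k => f (x k)) := EReal.antitone_of_add_le (fun k =>
    EReal.mul_nonneg (EReal.coe_nonneg.2 hδ.le)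
      (EReal.mul_nonneg (mLimSlope_nonneg f _) (mLimSlope_nonneg f _))) hdesc
  refine ⟨fun k => hanti k.le_succ, ?_⟩
  suffices h : ⨅ k, f (x k) = m from h ▸ tendsto_atTop_iInf hanti
  refine le_antisymm (not_lt.1 fun hlt => ?_) (le_iInf fun k => sInf_le (Set.mem_range_self _))
  obtain ⟨r, hmr, hr⟩ := EReal.lt_iff_exists_real_btwn.1 hlt
  have hm_bot : m ≠ ⊥ := fun h => by simp [h] at hinit
  obtain ⟨m', hm'⟩ : ∃ m' : ℝ, m = m' := ⟨_, (EReal.coe_toReal hmr.ne_top hm_bot).symm⟩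
  rw [hm'] at hKL hmr
  rw [hm', ← EReal.coe_add] at hinit
  obtain ⟨c, hc, hslope⟩ := exists_pos_le_mLimSlope_of_KL hφ'c hKL (EReal.coe_lt_coe_iff.1 hmr)
  have hr_le : ∀ k, (r : EReal) ≤ f (x k) := fun k => hr.le.trans (iInf_le _ k)
  have hstep : ∀ k, f (x (k + 1)) + (δ * (c * c) : ℝ) ≤ f (x k) := fun k => by
    have hc_le := hslope (x (k + 1)) (hr_le _) ((hanti (Nat.zero_le _)).trans_lt hinit)
    refine le_trans ?_ (hdesc k)
    rw [EReal.coe_mul, EReal.coe_mul]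
    gcongr f (x (k + 1)) + ?_
    exact mul_le_mul_of_nonneg_left (mul_le_mul hc_le hc_le (EReal.coe_nonneg.2 hc.le)
      (mLimSlope_nonneg f _)) (EReal.coe_nonneg.2 hδ.le)
  obtain ⟨k, hk⟩ := EReal.exists_lt_of_add_le (u := fun k => f (x k)) (by positivity) hstep
    (hinit.trans (EReal.coe_lt_top _)).ne r
  exact (hr_le k).not_gt hk

/-- Value convergence: if `f` is lsc, proper, bounded below, satisfies the KL property for
minimization with desingularizer `φ` (threshold `ρ`), then there is `ε > 0` such that any
sequence satisfying the descent condition `f x_k - f x_{k+1} ≥ δ·(limSlope f x_{k+1})²`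
with initial gap `< ε` has values decreasing monotonically to `inf f`. -/
theorem value_convergence {X : Type*} [MetricSpace X] (f : X → EReal)
    (hlsc : LowerSemicontinuous f)
    (hproper : ∃ x, f x ≠ ⊤) (hnb : ∀ x, f x ≠ ⊥)
    (hbdd : ∃ b : ℝ, ∀ x, (b : EReal) ≤ f x)
    (φ φ' : ℝ → ℝ)
    (hφc : ContinuousOn φ (Set.Ici 0)) (hφ0 : φ 0 = 0)
    (hφd : ∀ t > (0 : ℝ), HasDerivAt φ (φ' t) t)
    (hφ'c : ContinuousOn φ' (Set.Ioi 0))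
    (hφ'pos : ∀ t > (0 : ℝ), 0 < φ' t)
    (ρ : ℝ) (hρ : 0 < ρ)
    (hKL : ∀ x : X, 0 < f x - sInf (Set.range f) → f x - sInf (Set.range f) < (ρ : EReal) →
      (1 : EReal) ≤ ((φ' ((f x - sInf (Set.range f)).toReal) : ℝ) : EReal) * mLimSlope f x)
    (δ : ℝ) (hδ : 0 < δ) :
    ∃ ε > (0 : ℝ), ∀ x : ℕ → X,
      (∀ k : ℕ, f (x (k+1)) + (δ : EReal) * (mLimSlope f (x (k+1)) * mLimSlope f (x (k+1)))
          ≤ f (x k)) →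
      f (x 0) < sInf (Set.range f) + (ε : EReal) →
      (∀ k : ℕ, f (x (k+1)) ≤ f (x k)) ∧
        Tendsto (fun k => f (x k)) atTop (nhds (sInf (Set.range f))) :=
  value_convergence_general f φ' hφ'c ρ hρ hKL δ hδ
end

section
/- Let (τ_k) be a sequence of positive reals decreasing to 0, and suppose the desingularizer φ has moderate growth (φ'(τ) = o(1/τ) as τ↓0) and for some δ>0 the inequality τ_{k-1} - τ_k ≥ δ/(φ'(τ_k))² holds for all k. Then τ_k = o(1/k). -/
open Filter Topology

private lemma alg1 {c B b : ℝ} (hc : 0 < c) (hb : 0 ≤ b) (h : c * b^2 ≤ 8 * B) :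
    b ≤ max (16/c) (B / Real.sqrt 2) := by
  by_contra h'
  rw [not_le, max_lt_iff] at h'
  obtain ⟨h1, h2⟩ := h'
  have hbpos : 0 < b := lt_trans (by positivity) h1
  have hs2 : Real.sqrt 2 < 2 := by
    nlinarith [Real.sq_sqrt (show (0:ℝ) ≤ 2 by norm_num), Real.sqrt_nonneg 2]
  have hspos : (0:ℝ) < Real.sqrt 2 := Real.sqrt_pos.mpr (by norm_num)
  have hB : B < Real.sqrt 2 * b := by
    rw [div_lt_iff₀ hspos] at h2; linarith [h2]
  have h1' : 16 < b * c := (div_lt_iff₀ hc).mp h1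
  nlinarith [mul_lt_mul_of_pos_right h1' hbpos, mul_lt_mul_of_pos_left hs2 hbpos]

private lemma telA {τ : ℕ → ℝ} (hpos : ∀ k, 0 < τ k) (hmono : ∀ k, τ (k+1) ≤ τ k)
    {c : ℝ} (hc : 0 ≤ c) {N : ℕ}
    (hkey : ∀ n, N ≤ n → c * τ (n+1)^2 ≤ τ n - τ (n+1)) :
    ∀ m, N ≤ m → ∀ k, m ≤ k → c * ((k:ℝ) - m) * τ k ^2 ≤ τ m - τ k := by
  intro m hm k hk
  induction k, hk using Nat.le_induction with
  | base => simp
  | succ k hk ih =>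
    have h1 := hkey k (le_trans hm hk)
    have hsq : τ (k+1)^2 ≤ τ k^2 := pow_le_pow_left₀ (hpos _).le (hmono k) 2
    have hkm : (0:ℝ) ≤ (k:ℝ) - m := by
      have : (m:ℝ) ≤ k := Nat.cast_le.mpr hk
      linarith
    have h2 : c * ((k:ℝ) - m) * τ (k+1)^2 ≤ c * ((k:ℝ) - m) * τ k^2 :=
      mul_le_mul_of_nonneg_left hsq (mul_nonneg hc hkm)
    push_cast
    nlinarith [ih, h1, h2]

private lemma telB {τ : ℕ → ℝ} (hpos : ∀ k, 0 < τ k) (hmono : ∀ k, τ (k+1) ≤ τ k)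
    {c : ℝ} (hc : 0 < c) {N : ℕ}
    (hkey : ∀ n, N ≤ n → c * τ (n+1)^2 ≤ τ n - τ (n+1)) :
    ∀ k, 2*N+2 ≤ k → c * ((k:ℝ) * τ k)^2 ≤ 8 * (((k/2 : ℕ):ℝ) * τ (k/2)) := by
  intro k hk
  set m := k/2 with hmdef
  have hm : N ≤ m := by
    rw [hmdef, Nat.le_div_iff_mul_le (by norm_num)]; omega
  have hm1 : 1 ≤ m := by
    rw [hmdef, Nat.le_div_iff_mul_le (by norm_num)]; omega
  have hmk : m ≤ k := Nat.div_le_self _ _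
  have hA := telA hpos hmono hc.le hkey m hm k hmk
  have hcastm : ((m:ℕ):ℝ) ≤ (k:ℝ)/2 := by
    rw [hmdef]
    calc ((k/2:ℕ):ℝ) ≤ (k:ℝ)/2 := Nat.cast_div_le
    _ = (k:ℝ)/2 := by norm_num
  have hk4 : (k:ℝ) ≤ 4*m := by
    have : k ≤ 2*m+1 := by omega
    have h2 : (k:ℝ) ≤ 2*m+1 := by exact_mod_cast this
    have h3 : (1:ℝ) ≤ m := by exact_mod_cast hm1
    linarith
  have h1 : c * ((k:ℝ) - m) * τ k ^2 ≤ τ m := le_trans hA (by linarith [hpos k])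
  have h2 : c * ((k:ℝ)/2) * τ k^2 ≤ c * ((k:ℝ) - m) * τ k^2 := by
    apply mul_le_mul_of_nonneg_right _ (sq_nonneg _)
    apply mul_le_mul_of_nonneg_left _ hc.le
    linarith
  have h3 : c * ((k:ℝ)/2) * τ k^2 ≤ τ m := le_trans h2 h1
  have hknn : (0:ℝ) ≤ (k:ℝ) := Nat.cast_nonneg k
  have h4 := mul_le_mul_of_nonneg_left h3 hknn
  nlinarith [hpos m, mul_nonneg (sub_nonneg.mpr hk4) (hpos m).le]

private lemma telBound {τ : ℕ → ℝ} (hpos : ∀ k, 0 < τ k) (hmono : ∀ k, τ (k+1) ≤ τ k)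
    {c : ℝ} (hc : 0 < c) {N : ℕ}
    (hkey : ∀ n, N ≤ n → c * τ (n+1)^2 ≤ τ n - τ (n+1)) :
    ∃ M : ℝ, 16/c ≤ M ∧ ∀ k : ℕ, (k:ℝ) * τ k ≤ M := by
  refine ⟨16/c + ∑ i ∈ Finset.range (2*N+3), (i:ℝ)*τ i, ?_, ?_⟩
  · have : (0:ℝ) ≤ ∑ i ∈ Finset.range (2*N+3), (i:ℝ)*τ i :=
      Finset.sum_nonneg fun i _ => mul_nonneg (Nat.cast_nonneg i) (hpos i).le
    linarith
  · set M := 16/c + ∑ i ∈ Finset.range (2*N+3), (i:ℝ)*τ i with hMdef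
    have hM16 : 16/c ≤ M := by
      have : (0:ℝ) ≤ ∑ i ∈ Finset.range (2*N+3), (i:ℝ)*τ i :=
        Finset.sum_nonneg fun i _ => mul_nonneg (Nat.cast_nonneg i) (hpos i).le
      rw [hMdef]; linarith
    have hMpos : 0 < M := lt_of_lt_of_le (by positivity) hM16
    intro k
    induction k using Nat.strong_induction_on with
    | _ k ih =>
      by_cases hk : k ≤ 2*N+2
      · have hmem : k ∈ Finset.range (2*N+3) := Finset.mem_range.mpr (by omega)
        have : (k:ℝ)*τ k ≤ ∑ i ∈ Finset.range (2*N+3), (i:ℝ)*τ i :=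
          Finset.single_le_sum
            (fun i _ => mul_nonneg (Nat.cast_nonneg i) (hpos i).le) hmem
        have h16 : (0:ℝ) ≤ 16/c := by positivity
        rw [hMdef]; linarith
      · push_neg at hk
        have hB := telB hpos hmono hc hkey k (by omega)
        have ihm := ih (k/2) (Nat.div_lt_self (by omega) one_lt_two)
        have h8 : 16 ≤ c * M := by rw [div_le_iff₀ hc] at hM16; linarith
        have hbk2 : c * ((k:ℝ)*τ k)^2 ≤ 8 * M := le_trans hB (by linarith)
        have hbnn : (0:ℝ) ≤ (k:ℝ)*τ k := mul_nonneg (Nat.cast_nonneg k) (hpos k).le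
        have hsq : ((k:ℝ)*τ k)^2 ≤ M^2 := by nlinarith [mul_nonneg (by linarith : (0:ℝ) ≤ c*M - 16) hMpos.le]
        exact (pow_le_pow_iff_left₀ hbnn hMpos.le two_ne_zero).mp hsq

/-- If `(τ_k)` is a sequence of positive reals decreasing to `0`, `φ` is a desingularizer with
moderate growth (`φ'(τ)·τ → 0` as `τ ↓ 0`), and `τ_{k-1} - τ_k ≥ δ/(φ'(τ_k))²` for all `k`,
then `τ_k = o(1/k)`, i.e. `k·τ_k → 0`. -/
theorem gap_little_o {τ : ℕ → ℝ} (φ φ' : ℝ → ℝ)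
    (hφc : ContinuousOn φ (Set.Ici 0)) (hφ0 : φ 0 = 0)
    (hφd : ∀ t > (0 : ℝ), HasDerivAt φ (φ' t) t)
    (hφ'c : ContinuousOn φ' (Set.Ioi 0))
    (hφ'pos : ∀ t > (0 : ℝ), 0 < φ' t)
    (hmod : Tendsto (fun t => t * φ' t) (nhdsWithin 0 (Set.Ioi 0)) (nhds 0))
    (hpos : ∀ k, 0 < τ k) (hmono : ∀ k, τ (k+1) ≤ τ k)
    (hlim : Tendsto τ atTop (nhds 0))
    (δ : ℝ) (hδ : 0 < δ)
    (hineq : ∀ k : ℕ, δ / (φ' (τ (k+1)))^2 ≤ τ k - τ (k+1)) :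
    Tendsto (fun k : ℕ => (k : ℝ) * τ k) atTop (nhds 0) := by
  -- Step 1: for every ε > 0 the key inequality holds eventually
  have hbuild : ∀ ε : ℝ, 0 < ε → ∃ N : ℕ, ∀ n, N ≤ n →
      (δ/ε^2) * τ (n+1)^2 ≤ τ n - τ (n+1) := by
    intro ε hε
    obtain ⟨r, hr, hrε⟩ := Metric.tendsto_nhdsWithin_nhds.mp hmod ε hε
    obtain ⟨N, hN⟩ := Metric.tendsto_atTop.mp hlim r hr
    refine ⟨N, fun n hn => ?_⟩
    have htp : 0 < τ (n+1) := hpos (n+1)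
    have hd : dist (τ (n+1)) 0 < r := hN (n+1) (by omega)
    have h1 : τ (n+1) * φ' (τ (n+1)) < ε := by
      have := hrε (Set.mem_Ioi.mpr htp) hd
      rw [dist_zero_right] at this
      exact lt_of_abs_lt this
    set t := τ (n+1) with htdef
    have hφp : 0 < φ' t := hφ'pos t htp
    refine le_trans ?_ (hineq n)
    rw [div_mul_eq_mul_div, div_le_div_iff₀ (by positivity) (by positivity)]
    have h2 : (t * φ' t)^2 ≤ ε^2 :=
      pow_le_pow_left₀ (by positivity) h1.le 2
    nlinarith [h2, hδ.le]
  rw [NormedAddCommGroup.tendsto_nhds_zero]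
  intro ε' hε'
  -- global bound M, using ε = 1
  obtain ⟨N₁, hN₁⟩ := hbuild 1 one_pos
  have hc₁ : (0:ℝ) < δ/1^2 := by positivity
  obtain ⟨M, hM16, hM⟩ := telBound hpos hmono hc₁ hN₁
  have hMpos : 0 < M := lt_of_lt_of_le (by positivity) hM16
  -- choose ε so that 16/c = ε'/2
  set ε := Real.sqrt (δ * ε' / 32) with hεdef
  have hεpos : 0 < ε := Real.sqrt_pos.mpr (by positivity)
  have hεsq : ε^2 = δ*ε'/32 := Real.sq_sqrt (by positivity)
  set c := δ/ε^2 with hcdef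
  have hcpos : 0 < c := by positivity
  have h16c : 16/c = ε'/2 := by
    rw [hcdef, hεsq]
    field_simp
    ring
  obtain ⟨N, hN⟩ := hbuild ε hεpos
  have hspos : (0:ℝ) < Real.sqrt 2 := Real.sqrt_pos.mpr (by norm_num)
  have hs1 : (1:ℝ) ≤ Real.sqrt 2 := by
    rw [show (1:ℝ) = Real.sqrt 1 from (Real.sqrt_one).symm]
    exact Real.sqrt_le_sqrt (by norm_num)
  -- iterate the improvement
  have hC : ∀ j : ℕ, ∀ᶠ k : ℕ in atTop, (k:ℝ) * τ k ≤ max (16/c) (M / (Real.sqrt 2)^j) := by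
    intro j
    induction j with
    | zero =>
      refine Eventually.of_forall fun k => le_max_of_le_right ?_
      simpa using hM k
    | succ j ih =>
      rw [eventually_atTop] at ih
      obtain ⟨K, hK⟩ := ih
      filter_upwards [eventually_ge_atTop (2*N+2), eventually_ge_atTop (2*K)] with k hk1 hk2
      have hmK : K ≤ k/2 := by
        rw [Nat.le_div_iff_mul_le (by norm_num)]; omega
      have hB := telB hpos hmono hcpos hN k hk1
      set B := max (16/c) (M / (Real.sqrt 2)^j) with hBdef
      have hbm : ((k/2:ℕ):ℝ) * τ (k/2) ≤ B := hK _ hmK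
      have hbk2 : c * ((k:ℝ)*τ k)^2 ≤ 8 * B := le_trans hB (by linarith)
      have hbnn : (0:ℝ) ≤ (k:ℝ)*τ k := mul_nonneg (Nat.cast_nonneg k) (hpos k).le
      have halg := alg1 hcpos hbnn hbk2
      refine le_trans halg (max_le (le_max_left _ _) ?_)
      rcases le_total (16/c) (M / (Real.sqrt 2)^j) with hcase | hcase
      · rw [hBdef, max_eq_right hcase]
        apply le_max_of_le_right
        rw [div_div, ← pow_succ]
      · rw [hBdef, max_eq_left hcase]
        apply le_max_of_le_left
        exact div_le_self (by positivity) hs1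
  -- choose j with M / (√2)^j < ε'
  have htend : Tendsto (fun j : ℕ => (Real.sqrt 2)^j) atTop atTop :=
    tendsto_pow_atTop_atTop_of_one_lt (by
      rw [show (1:ℝ) = Real.sqrt 1 from (Real.sqrt_one).symm]
      exact Real.sqrt_lt_sqrt (by norm_num) (by norm_num))
  obtain ⟨j, hj⟩ := (htend.eventually_ge_atTop (M/ε' + 1)).exists
  have hjlt : M / (Real.sqrt 2)^j < ε' := by
    rw [div_lt_iff₀ (by positivity)]
    have h1 : M/ε' < (Real.sqrt 2)^j := by linarith [hj]
    calc M = (M/ε') * ε' := by field_simp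
    _ < (Real.sqrt 2)^j * ε' := by
        apply mul_lt_mul_of_pos_right h1 hε'
    _ = ε' * (Real.sqrt 2)^j := by ring
  filter_upwards [hC j] with k hk
  have hbnn : (0:ℝ) ≤ (k:ℝ)*τ k := mul_nonneg (Nat.cast_nonneg k) (hpos k).le
  rw [Real.norm_of_nonneg hbnn]
  calc (k:ℝ)*τ k ≤ max (16/c) (M / (Real.sqrt 2)^j) := hk
  _ < ε' := max_lt (by rw [h16c]; linarith) hjlt
end

section
/- Let (τ_k) be a nonincreasing sequence of positive reals and suppose τ_{k-1} - τ_k ≥ μ·τ_k^{2θ} for some μ > 0 and θ ∈ (1/2, 1) and all large k. Then τ_k = O(k^{-1/(2θ-1)}). -/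
open Filter Topology

/-- Bernoulli-type inequality for exponents in `[-1,0]`. -/
lemma bern_aux {u p : ℝ} (hu0 : 0 < u) (hp0 : 0 ≤ p) (hp1 : p ≤ 1) :
    1 + p * (1 - u) ≤ u ^ (-p) := by
  have h1 : u ^ p ≤ 1 + p * (u - 1) := by
    have := rpow_one_add_le_one_add_mul_self (s := u - 1) (by linarith) hp0 hp1
    simpa using this
  have hup : 0 < u ^ p := Real.rpow_pos_of_pos hu0 p
  rw [Real.rpow_neg hu0.le, ← one_div, le_div_iff₀ hup]
  nlinarith [sq_nonneg (p * (1 - u))]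

lemma step_ineq {x y p : ℝ} (hy : 0 < y) (hxy : y ≤ x) (hp0 : 0 ≤ p) (hp1 : p ≤ 1) :
    x ^ (-p) + p * x ^ (-(p+1)) * (x - y) ≤ y ^ (-p) := by
  have hx : 0 < x := hy.trans_le hxy
  have hu0 : 0 < y / x := div_pos hy hx
  have h := bern_aux hu0 hp0 hp1
  have hxp : 0 < x ^ (-p) := Real.rpow_pos_of_pos hx _
  have hmul : x ^ (-p) * (1 + p * (1 - y / x)) ≤ x ^ (-p) * (y / x) ^ (-p) :=
    mul_le_mul_of_nonneg_left h hxp.le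
  have hdiv : (y / x) ^ (-p) = y ^ (-p) / x ^ (-p) := Real.div_rpow hy.le hx.le (-p)
  rw [hdiv, mul_div_cancel₀ _ (ne_of_gt hxp)] at hmul
  calc x ^ (-p) + p * x ^ (-(p+1)) * (x - y)
      = x ^ (-p) * (1 + p * (1 - y / x)) := by
        have hpow : x ^ (-(p+1)) = x ^ (-p) / x := by
          rw [show -(p+1) = -p - 1 by ring, Real.rpow_sub hx, Real.rpow_one]
        rw [hpow]; field_simp
    _ ≤ y ^ (-p) := hmul

/-- If `(τ_k)` is a nonincreasing sequence of positive reals with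
`τ_{k-1} - τ_k ≥ μ·τ_k^(2θ)` for some `μ > 0`, `θ ∈ (1/2,1)`, and all large `k`,
then `τ_k = O(k^(-1/(2θ-1)))`. -/
theorem gap_big_O {τ : ℕ → ℝ} {μ θ : ℝ} (hμ : 0 < μ) (hθ : θ ∈ Set.Ioo (1/2 : ℝ) 1)
    (hpos : ∀ k, 0 < τ k) (hmono : ∀ k, τ (k+1) ≤ τ k)
    (hineq : ∃ N : ℕ, ∀ k ≥ N, μ * (τ (k+1)) ^ (2 * θ) ≤ τ k - τ (k+1)) :
    ∃ C > (0 : ℝ), ∀ k : ℕ, 1 ≤ k → τ k ≤ C * (k : ℝ) ^ (-(1 / (2 * θ - 1))) := by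
  obtain ⟨N, hN⟩ := hineq
  obtain ⟨hθ1, hθ2⟩ := hθ
  have hanti : ∀ m n : ℕ, m ≤ n → τ n ≤ τ m := fun m n h =>
    antitone_nat_of_succ_le hmono h
  set α : ℝ := 2 * θ with hαdef
  have hα1 : 1 < α := by rw [hαdef]; linarith
  have hα2 : α < 2 := by rw [hαdef]; linarith
  set p : ℝ := α - 1 with hpdef
  have hp0 : 0 < p := by rw [hpdef]; linarith
  have hp1 : p ≤ 1 := by rw [hpdef]; linarith
  set b : ℝ := -(1 / p) with hbdef
  have hbneg : b < 0 := by rw [hbdef]; simp [hp0, one_div, inv_pos]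
  -- the increment constant
  set s : ℕ → ℝ := fun k => τ k ^ (-p) with hsdef
  have hspos : ∀ k, 0 < s k := fun k => Real.rpow_pos_of_pos (hpos k) _
  have h2p : (2:ℝ) ^ (-p) < 1 :=
    Real.rpow_lt_one_of_one_lt_of_neg (by norm_num) (by linarith)
  set c : ℝ := min (p * μ * (2:ℝ) ^ (-α)) ((1 - (2:ℝ) ^ (-p)) * τ N ^ (-p)) with hcdef
  have hc0 : 0 < c := by
    apply lt_min
    · have : (0:ℝ) < (2:ℝ) ^ (-α) := Real.rpow_pos_of_pos (by norm_num) _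
      positivity
    · have h1 : (0:ℝ) < 1 - (2:ℝ) ^ (-p) := by linarith
      have h2 : (0:ℝ) < τ N ^ (-p) := Real.rpow_pos_of_pos (hpos N) _
      positivity
  -- key step inequality
  have key : ∀ k, N ≤ k → s k + c ≤ s (k+1) := by
    intro k hk
    have hgap := hN k hk
    have hτk := hpos k
    have hτk1 := hpos (k+1)
    have hstep := step_ineq hτk1 (hmono k) hp0.le hp1
    have hpα : -(p+1) = -α := by rw [hpdef]; ring
    rw [hpα] at hstep
    rcases le_or_gt (τ k) (2 * τ (k+1)) with hcase | hcase
    · -- ratio at least 1/2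
      have hA : (0:ℝ) < τ k ^ (-α) := Real.rpow_pos_of_pos hτk _
      have hT : (0:ℝ) < τ (k+1) ^ α := Real.rpow_pos_of_pos hτk1 _
      have hratio : (2:ℝ) ^ (-α) ≤ τ k ^ (-α) * τ (k+1) ^ α := by
        have hq : (2:ℝ)⁻¹ ≤ τ (k+1) / τ k := by
          rw [le_div_iff₀ hτk]; linarith
        have := Real.rpow_le_rpow (by norm_num) hq (by linarith : (0:ℝ) ≤ α)
        rw [Real.div_rpow hτk1.le hτk.le, Real.inv_rpow (by norm_num)] at this
        rw [Real.rpow_neg (by norm_num : (0:ℝ) ≤ 2), Real.rpow_neg hτk.le]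
        calc ((2:ℝ) ^ α)⁻¹ ≤ τ (k+1) ^ α / τ k ^ α := this
          _ = (τ k ^ α)⁻¹ * τ (k+1) ^ α := by ring
      have hmid : p * μ * (2:ℝ) ^ (-α) ≤ p * τ k ^ (-α) * (τ k - τ (k+1)) := by
        have h1 : μ * τ (k+1) ^ α ≤ τ k - τ (k+1) := hgap
        have h2 : p * τ k ^ (-α) * (μ * τ (k+1) ^ α) ≤
            p * τ k ^ (-α) * (τ k - τ (k+1)) := by
          apply mul_le_mul_of_nonneg_left h1 (by positivity)
        calc p * μ * (2:ℝ) ^ (-α) ≤ p * μ * (τ k ^ (-α) * τ (k+1) ^ α) := by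
              apply mul_le_mul_of_nonneg_left hratio (by positivity)
          _ = p * τ k ^ (-α) * (μ * τ (k+1) ^ α) := by ring
          _ ≤ _ := h2
      have : c ≤ p * μ * (2:ℝ) ^ (-α) := min_le_left _ _
      simp only [hsdef]
      linarith
    · -- big drop case
      have h2τ : (0:ℝ) < 2 * τ (k+1) := by linarith
      have hsk : s k ≤ (2:ℝ) ^ (-p) * τ (k+1) ^ (-p) := by
        have := Real.rpow_le_rpow_of_nonpos h2τ hcase.le (by linarith : -p ≤ 0)
        rw [Real.mul_rpow (by norm_num : (0:ℝ) ≤ 2) hτk1.le] at this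
        simpa [hsdef] using this
      have hτN : τ N ^ (-p) ≤ τ (k+1) ^ (-p) :=
        Real.rpow_le_rpow_of_nonpos hτk1 (hanti N (k+1) (by omega)) (by linarith)
      have hc2 : c ≤ (1 - (2:ℝ) ^ (-p)) * τ N ^ (-p) := min_le_right _ _
      have hfac : (1 - (2:ℝ) ^ (-p)) * τ N ^ (-p) ≤
          (1 - (2:ℝ) ^ (-p)) * τ (k+1) ^ (-p) :=
        mul_le_mul_of_nonneg_left hτN (by linarith)
      have hs1 : s (k+1) = τ (k+1) ^ (-p) := rfl
      simp only [hsdef]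
      nlinarith [hspos (k+1)]
  -- growth by induction
  have hgrow : ∀ m : ℕ, s N + m * c ≤ s (N + m) := by
    intro m
    induction m with
    | zero => simp
    | succ n ih =>
      have h1 := key (N + n) (by omega)
      have : (N + (n+1)) = (N + n) + 1 := by omega
      rw [this]
      push_cast
      linarith
  -- bound for large k
  have hbig : ∀ k : ℕ, 2 * N + 2 ≤ k → (c/2) * k ≤ s k := by
    intro k hk
    have hm : k = N + (k - N) := by omega
    have h1 := hgrow (k - N)
    rw [← hm] at h1
    have h2 : ((k - N : ℕ) : ℝ) = (k : ℝ) - N := by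
      have : N ≤ k := by omega
      push_cast [this]; ring
    have h3 : (N : ℝ) ≤ (k : ℝ) / 2 := by
      have : (2*N : ℕ) ≤ k := by omega
      have h := (Nat.cast_le (α := ℝ)).mpr this
      push_cast at h ⊢
      linarith
    have h4 : (k:ℝ)/2 ≤ ((k - N : ℕ) : ℝ) := by rw [h2]; linarith
    have h5 : ((k - N : ℕ) : ℝ) * c ≤ s k := by nlinarith [hspos N]
    nlinarith
  -- translate to bound on τ
  have hmain : ∀ k : ℕ, 2 * N + 2 ≤ k → τ k ≤ (c/2) ^ b * (k : ℝ) ^ b := by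
    intro k hk
    have hkpos : (0:ℝ) < (k:ℝ) := by
      have : (1:ℕ) ≤ k := by omega
      exact_mod_cast Nat.lt_of_lt_of_le Nat.zero_lt_one this
    have ht : (0:ℝ) < (c/2) * k := by positivity
    have h1 := hbig k hk
    have h2 : (s k) ^ b ≤ ((c/2) * k) ^ b :=
      Real.rpow_le_rpow_of_nonpos ht h1 hbneg.le
    have h3 : (s k) ^ b = τ k := by
      rw [hsdef]
      rw [← Real.rpow_mul (hpos k).le]
      have : -p * b = 1 := by
        rw [hbdef]; field_simp
      rw [this, Real.rpow_one]
    have h4 : ((c/2) * k) ^ b = (c/2) ^ b * (k:ℝ) ^ b :=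
      Real.mul_rpow (by positivity) hkpos.le
    rw [h3, h4] at h2
    exact h2
  -- choose the constant
  set C : ℝ := max ((c/2) ^ b) (τ 0 * ((2*N+2 : ℕ) : ℝ) ^ (-b)) with hCdef
  have hC0 : 0 < C := by
    apply lt_max_of_lt_left
    exact Real.rpow_pos_of_pos (by positivity) _
  refine ⟨C, hC0, ?_⟩
  intro k hk
  have hkpos : (0:ℝ) < (k:ℝ) := by exact_mod_cast hk
  have hkb : (0:ℝ) < (k:ℝ) ^ b := Real.rpow_pos_of_pos hkpos _
  rcases le_or_gt (2 * N + 2) k with hcase | hcase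
  · calc τ k ≤ (c/2) ^ b * (k:ℝ) ^ b := hmain k hcase
      _ ≤ C * (k:ℝ) ^ b := mul_le_mul_of_nonneg_right (le_max_left _ _) hkb.le
  · have hKpos : (0:ℝ) < ((2*N+2 : ℕ) : ℝ) := by positivity
    have hkle : (k:ℝ) ≤ ((2*N+2 : ℕ) : ℝ) := by exact_mod_cast hcase.le
    have h1 : ((2*N+2 : ℕ) : ℝ) ^ b ≤ (k:ℝ) ^ b :=
      Real.rpow_le_rpow_of_nonpos hkpos hkle hbneg.le
    have h2 : τ 0 * ((2*N+2 : ℕ) : ℝ) ^ (-b) * ((2*N+2 : ℕ) : ℝ) ^ b = τ 0 := by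
      rw [mul_assoc, ← Real.rpow_add hKpos]
      simp
    calc τ k ≤ τ 0 := hanti 0 k (Nat.zero_le k)
      _ = τ 0 * ((2*N+2 : ℕ) : ℝ) ^ (-b) * ((2*N+2 : ℕ) : ℝ) ^ b := h2.symm
      _ ≤ τ 0 * ((2*N+2 : ℕ) : ℝ) ^ (-b) * (k:ℝ) ^ b := by
          apply mul_le_mul_of_nonneg_left h1
          have h0 : (0:ℝ) < ((2*N+2 : ℕ) : ℝ) ^ (-b) := Real.rpow_pos_of_pos hKpos _
          exact mul_nonneg (hpos 0).le h0.le
      _ ≤ C * (k:ℝ) ^ b := mul_le_mul_of_nonneg_right (le_max_right _ _) hkb.le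
end

section
/- Let X be a complete metric space and f : X → ℝ∪{+∞} lower semicontinuous, proper, and bounded below. Then for any x ∈ dom f and constants α, β > 0 with α·β < 1/2, there exists x₊ ∈ X satisfying f(x) - f(x₊) ≥ α·d(x,x₊)² and d(x,x₊) ≥ β·|∇f|(x₊). -/
/-!
Apply Ekeland's principle with a small constant `σ > 0` to `h = f + α d(x, ·)²`: the point `z` it
gives satisfies `h z + σ d(x, z) ≤ h x` and minimizes `h + σ d(z, ·)`, and since
`d(x, y)² ≤ (d(x, z) + d(z, y))²` this bounds `|∇f|(z)` by `2 α d(x, z) + σ`. If `x` itself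
minimizes `h`, then `|∇f|(x) = 0` and `x₊ = x`. Otherwise lower semicontinuity keeps `z` at a
distance `r > 0` from `x` uniformly in small `σ`, and `β σ ≤ (1 - 2 α β) r` gives
`β |∇f|(z) ≤ d(x, z)`.
-/

open Filter Topology

lemma LowerSemicontinuous.add_coe {X : Type*} [TopologicalSpace X] {f : X → EReal} {g : X → ℝ}
    (hf : LowerSemicontinuous f) (hg : Continuous g) :
    LowerSemicontinuous fun x => f x + (g x : EReal) :=
  hf.add' (continuous_coe_real_ereal.comp hg).lowerSemicontinuous fun _ =>
    EReal.continuousAt_add (Or.inr (EReal.coe_ne_bot _)) (Or.inr (EReal.coe_ne_top _))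

lemma EReal.exists_mem_forall_le_add {ι : Type*} {s : Set ι} (hs : s.Nonempty) {g : ι → EReal}
    {b : ℝ} (hb : ∀ i ∈ s, (b : EReal) ≤ g i) {ε : ℝ} (hε : 0 < ε) :
    ∃ i ∈ s, ∀ j ∈ s, g i ≤ g j + ε := by
  set m := sInf (g '' s)
  have hbm : (b : EReal) ≤ m := le_sInf (by rintro _ ⟨i, hi, rfl⟩; exact hb i hi)
  by_cases hm : m = ⊤
  · obtain ⟨i, hi⟩ := hs
    refine ⟨i, hi, fun j hj => ?_⟩
    rw [sInf_eq_top.1 hm (g j) ⟨j, hj, rfl⟩, EReal.top_add_coe]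
    exact le_top
  · lift m to ℝ using ⟨hm, ne_bot_of_le_ne_bot (EReal.coe_ne_bot b) hbm⟩ with μ hμ
    obtain ⟨_, ⟨i, hi, rfl⟩, hlt⟩ :=
      sInf_lt_iff.1 (hμ ▸ EReal.coe_lt_coe_iff.2 (lt_add_of_pos_right μ hε))
    refine ⟨i, hi, fun j hj => hlt.le.trans ?_⟩
    rw [EReal.coe_add]
    gcongr
    exact hμ ▸ sInf_le ⟨j, hj, rfl⟩

section Ekeland

variable {X : Type*} [MetricSpace X] {h : X → EReal} {σ : ℝ}

variable (h σ) in
def ekelandSet (y : X) : Set X := {w | h w + ((σ * dist y w : ℝ) : EReal) ≤ h y}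

lemma self_mem_ekelandSet (y : X) : y ∈ ekelandSet h σ y := by
  simp [ekelandSet]

lemma le_of_mem_ekelandSet (hσ : 0 ≤ σ) {y w : X} (hw : w ∈ ekelandSet h σ y) : h w ≤ h y :=
  (le_add_of_nonneg_right (by exact_mod_cast mul_nonneg hσ dist_nonneg)).trans hw

lemma ekelandSet_subset (hσ : 0 ≤ σ) {y z : X} (hz : z ∈ ekelandSet h σ y) :
    ekelandSet h σ z ⊆ ekelandSet h σ y := by
  intro w hw
  calc h w + ((σ * dist y w : ℝ) : EReal)
      ≤ h w + ((σ * dist z w : ℝ) : EReal) + ((σ * dist y z : ℝ) : EReal) := by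
        rw [add_assoc, ← EReal.coe_add]
        gcongr
        nlinarith [dist_triangle y z w]
    _ ≤ h z + ((σ * dist y z : ℝ) : EReal) := by gcongr; exact hw
    _ ≤ h y := hz

lemma isClosed_ekelandSet (hh : LowerSemicontinuous h) (y : X) :
    IsClosed (ekelandSet h σ y) :=
  (hh.add_coe (by fun_prop)).isClosed_preimage (h y)

lemma ekelandSet_subset_closedBall (hσ : 0 < σ) {b : ℝ} (hb : ∀ y, (b : EReal) ≤ h y)
    {y w : X} {ρ : ℝ} (hw : w ∈ ekelandSet h σ y) (htop : h w ≠ ⊤)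
    (hmin : ∀ v ∈ ekelandSet h σ y, h w ≤ h v + ((σ * ρ : ℝ) : EReal)) :
    ekelandSet h σ w ⊆ Metric.closedBall w ρ := by
  intro v hv
  have hvtop : h v ≠ ⊤ := ne_top_of_le_ne_top htop (le_of_mem_ekelandSet hσ.le hv)
  lift h v to ℝ using ⟨hvtop, ne_bot_of_le_ne_bot (EReal.coe_ne_bot b) (hb v)⟩ with t ht
  have hle : ((t + σ * dist w v : ℝ) : EReal) ≤ ((t + σ * ρ : ℝ) : EReal) := by
    rw [EReal.coe_add, EReal.coe_add, ht]
    exact hv.trans (ht ▸ hmin v (ekelandSet_subset hσ.le hw hv))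
  rw [Metric.mem_closedBall, dist_comm]
  exact le_of_mul_le_mul_left (by linarith [EReal.coe_le_coe_iff.1 hle]) hσ

theorem ekeland_variational_principle [CompleteSpace X] (hh : LowerSemicontinuous h) {b : ℝ}
    (hb : ∀ y, (b : EReal) ≤ h y) {x : X} (hx : h x ≠ ⊤) (hσ : 0 < σ) :
    ∃ z, h z + ((σ * dist x z : ℝ) : EReal) ≤ h x ∧
      ∀ y, h z ≤ h y + ((σ * dist z y : ℝ) : EReal) := by
  set ρ : ℕ → ℝ := fun n => 1 / ((n : ℝ) + 1)
  have hρ : Tendsto ρ atTop (𝓝 0) := tendsto_one_div_add_atTop_nhds_zero_nat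
  choose g hg_mem hg_min using fun (y : X) (n : ℕ) =>
    EReal.exists_mem_forall_le_add ⟨y, self_mem_ekelandSet y⟩ (fun w _ => hb w)
      (mul_pos hσ (Nat.one_div_pos_of_nat : 0 < ρ n))
  -- `u` is a sequence of successive near-minimizers over shrinking Ekeland sets
  let u : ℕ → X := fun n => Nat.rec (g x 0) (fun n p => g p (n + 1)) n
  have hu_anti : Antitone fun n => ekelandSet h σ (u n) :=
    antitone_nat_of_succ_le fun n => ekelandSet_subset hσ.le (hg_mem (u n) (n + 1))
  have hu_x : ekelandSet h σ (u 0) ⊆ ekelandSet h σ x := ekelandSet_subset hσ.le (hg_mem x 0)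
  have hu_top : ∀ n, h (u n) ≠ ⊤ := fun n => ne_top_of_le_ne_top hx <|
    le_of_mem_ekelandSet hσ.le (hu_x (hu_anti (Nat.zero_le n) (self_mem_ekelandSet _)))
  have hu_ball : ∀ n, ekelandSet h σ (u n) ⊆ Metric.closedBall (u n) (ρ n) := by
    rintro (_ | n)
    · exact ekelandSet_subset_closedBall hσ hb (hg_mem _ _) (hu_top 0) (hg_min _ _)
    · exact ekelandSet_subset_closedBall hσ hb (hg_mem _ _) (hu_top (n + 1)) (hg_min _ _)
  have hu_near : ∀ n {v}, v ∈ ekelandSet h σ (u n) → dist (u n) v ≤ ρ n := fun n v hv => by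
    rw [dist_comm]; exact hu_ball n hv
  have hu_cauchy : CauchySeq u := cauchySeq_of_le_tendsto_0' ρ
    (fun n m hnm => hu_near n (hu_anti hnm (self_mem_ekelandSet _))) hρ
  obtain ⟨z, hz⟩ := cauchySeq_tendsto_of_complete hu_cauchy
  have hz_mem : ∀ n, z ∈ ekelandSet h σ (u n) := fun n =>
    (isClosed_ekelandSet hh _).mem_of_tendsto hz
      ((eventually_ge_atTop n).mono fun m hm => hu_anti hm (self_mem_ekelandSet _))
  refine ⟨z, hu_x (hz_mem 0), fun y => ?_⟩
  by_contra! hy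
  have hy_mem : ∀ n, y ∈ ekelandSet h σ (u n) := fun n => ekelandSet_subset hσ.le (hz_mem n) hy.le
  have hy_lim : Tendsto u atTop (𝓝 y) := tendsto_iff_dist_tendsto_zero.2 <|
    squeeze_zero (fun _ => dist_nonneg) (fun n => hu_near n (hy_mem n)) hρ
  rw [tendsto_nhds_unique hy_lim hz] at hy
  simp at hy

end Ekeland

section Slope

variable {X : Type*} [MetricSpace X] {f : X → EReal}

lemma mSlope_le_of_eventually_le {w : X} (hw : f w ≠ ⊤) {c K : ℝ} (hc : 0 ≤ c) (hK : 0 ≤ K)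
    (hle : ∀ᶠ y in 𝓝 w, f w ≤ f y + ((c * dist w y + K * dist w y ^ 2 : ℝ) : EReal)) :
    mSlope f w ≤ c := by
  rw [mSlope, if_neg hw]
  refine EReal.le_of_forall_lt_iff_le.1 fun e he => ?_
  have hce : 0 < e - c := sub_pos.2 (EReal.coe_lt_coe_iff.1 he)
  refine sInf_le ⟨e, by linarith, rfl, ?_⟩
  filter_upwards [hle, Metric.ball_mem_nhds w (div_pos hce (by linarith : (0 : ℝ) < K + 1))]
    with y hy hyw
  refine hy.trans (add_le_add_right (EReal.coe_le_coe_iff.2 ?_) _)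
  rw [Metric.mem_ball, dist_comm, lt_div_iff₀ (by linarith)] at hyw
  nlinarith [dist_nonneg (x := w) (y := y)]

lemma mSlope_le_of_forall_le_add_sq_dist {x z : X} (hz : f z ≠ ⊤) {α σ : ℝ} (hα : 0 ≤ α)
    (hσ : 0 ≤ σ) (hmin : ∀ y, f z + ((α * dist x z ^ 2 : ℝ) : EReal) ≤
      f y + ((α * dist x y ^ 2 : ℝ) : EReal) + ((σ * dist z y : ℝ) : EReal)) :
    mSlope f z ≤ ((2 * α * dist x z + σ : ℝ) : EReal) := by
  refine mSlope_le_of_eventually_le hz (by positivity) hα (Eventually.of_forall fun y => ?_)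
  refine (EReal.addLECancellable_coe (α * dist x z ^ 2)).add_le_add_iff_right.1 ((hmin y).trans ?_)
  rw [add_assoc, add_assoc, ← EReal.coe_add, ← EReal.coe_add]
  refine add_le_add_right (EReal.coe_le_coe_iff.2 ?_) _
  nlinarith [mul_le_mul_of_nonneg_left (pow_le_pow_left₀ dist_nonneg (dist_triangle x z y) 2) hα]

end Slope

lemma LowerSemicontinuous.exists_pos_eventually_le_dist {X : Type*} [MetricSpace X]
    {h : X → EReal} (hh : LowerSemicontinuous h) {x y : X} (hy : h y < h x) :
    ∃ r > 0, ∀ᶠ σ in 𝓝[>] (0 : ℝ),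
      ∀ z, h z ≤ h y + ((σ * dist z y : ℝ) : EReal) → r ≤ dist x z := by
  obtain ⟨t, hyt, htx⟩ := EReal.lt_iff_exists_real_btwn.1 hy
  obtain ⟨c, htc, hcx⟩ := EReal.lt_iff_exists_real_btwn.1 htx
  obtain ⟨r, hr, hball⟩ := Metric.eventually_nhds_iff.1 (hh x c hcx)
  refine ⟨r, hr, ?_⟩
  have hK : Tendsto (fun σ : ℝ => σ * (r + dist x y)) (𝓝[>] 0) (𝓝 0) := by
    simpa using ((continuous_mul_const (r + dist x y)).tendsto 0).mono_left nhdsWithin_le_nhds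
  filter_upwards [self_mem_nhdsWithin,
    hK.eventually (gt_mem_nhds (sub_pos.2 (EReal.coe_lt_coe_iff.1 htc)))] with σ hσ hσK z hz
  by_contra! hzx
  refine (hball (by rwa [dist_comm])).not_ge (hz.trans ?_)
  calc h y + ((σ * dist z y : ℝ) : EReal) ≤ ((t + σ * (r + dist x y) : ℝ) : EReal) := by
        rw [EReal.coe_add]
        gcongr
        · exact hσ.le
        · linarith [dist_triangle z x y, dist_comm x z]
    _ ≤ c := EReal.coe_le_coe_iff.2 (by linarith)

theorem exists_slope_descent_general {X : Type*} [MetricSpace X] [CompleteSpace X]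
    (f : X → EReal) (hlsc : LowerSemicontinuous f)
    (hbdd : ∃ b : ℝ, ∀ x, (b : EReal) ≤ f x)
    (x : X) (hx : f x ≠ ⊤)
    (α β : ℝ) (hα : 0 < α) (hβ : 0 < β) (hαβ : α * β < 1/2) :
    ∃ xp : X,
      f xp + ((α * (dist x xp) ^ 2 : ℝ) : EReal) ≤ f x ∧
      (β : EReal) * mSlope f xp ≤ ((dist x xp : ℝ) : EReal) := by
  obtain ⟨b, hb⟩ := hbdd
  set h : X → EReal := fun y => f y + ((α * dist x y ^ 2 : ℝ) : EReal)
  have hh : LowerSemicontinuous h := hlsc.add_coe (by fun_prop)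
  have hhx : h x = f x := by simp [h]
  have hfh : ∀ y, f y ≤ h y := fun y => le_add_of_nonneg_right (by exact_mod_cast by positivity)
  by_cases hmin : ∀ y, h x ≤ h y
  · have hslope := mSlope_le_of_forall_le_add_sq_dist (x := x) hx hα.le le_rfl fun y => by
      simpa [h] using hmin y
    refine ⟨x, by simp, ?_⟩
    simpa using mul_le_mul_of_nonneg_left hslope (EReal.coe_nonneg.2 hβ.le)
  obtain ⟨y, hy⟩ : ∃ y, h y < h x := by simpa using hmin
  obtain ⟨r, hr, hfar⟩ := hh.exists_pos_eventually_le_dist hy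
  have hgap : 0 < 1 - 2 * α * β := by linarith
  obtain ⟨σ, hσfar, hσ, hσr⟩ :=
    (hfar.and (Ioo_mem_nhdsGT (by positivity : 0 < (1 - 2 * α * β) * r / β))).exists
  obtain ⟨z, hzx, hzmin⟩ :=
    ekeland_variational_principle hh (fun y => (hb y).trans (hfh y)) (hhx ▸ hx) hσ
  have hdesc : h z ≤ f x :=
    (le_add_of_nonneg_right (by exact_mod_cast by positivity)).trans (hhx ▸ hzx)
  refine ⟨z, hdesc, ?_⟩
  have hslope := mSlope_le_of_forall_le_add_sq_dist
    (ne_top_of_le_ne_top hx ((hfh z).trans hdesc)) hα.le hσ.le hzmin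
  have hrz : r ≤ dist x z := hσfar z (hzmin y)
  rw [lt_div_iff₀ hβ] at hσr
  calc (β : EReal) * mSlope f z ≤ β * ((2 * α * dist x z + σ : ℝ) : EReal) :=
        mul_le_mul_of_nonneg_left hslope (EReal.coe_nonneg.2 hβ.le)
    _ ≤ dist x z := by
        rw [← EReal.coe_mul, EReal.coe_le_coe_iff]
        nlinarith [mul_le_mul_of_nonneg_left hrz hgap.le]

/-- Existence of slope-descent steps: on a complete metric space, for any lsc proper
bounded-below `f : X → ℝ∪{+∞}`, point `x ∈ dom f`, and `α, β > 0` with `α·β < 1/2`,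
there exists `xp` with `f x - f xp ≥ α·d(x,xp)²` and `d(x,xp) ≥ β·|∇f|(xp)`. -/
theorem exists_slope_descent {X : Type*} [MetricSpace X] [CompleteSpace X]
    (f : X → EReal) (hlsc : LowerSemicontinuous f)
    (hnb : ∀ x, f x ≠ ⊥) (hbdd : ∃ b : ℝ, ∀ x, (b : EReal) ≤ f x)
    (x : X) (hx : f x ≠ ⊤)
    (α β : ℝ) (hα : 0 < α) (hβ : 0 < β) (hαβ : α * β < 1/2) :
    ∃ xp : X,
      f xp + ((α * (dist x xp) ^ 2 : ℝ) : EReal) ≤ f x ∧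
      (β : EReal) * mSlope f xp ≤ ((dist x xp : ℝ) : EReal) :=
  exists_slope_descent_general f hlsc hbdd x hx α β hα hβ hαβ
end

section
/- Let X be a complete metric space and f : X → ℝ∪{+∞} lower semicontinuous, proper, bounded below, satisfying the KL property for minimization with a concave desingularizer φ. Let (x_k) satisfy the slope-descent conditions f(x_k) - f(x_{k+1}) ≥ α·d(x_k,x_{k+1})² and d(x_k,x_{k+1}) ≥ β·(limiting slope of f at x_{k+1}) for constants α, β > 0, with f(x_0) sufficiently close to inf f. Then (x_k) converges to a minimizer of f. -/
open Filter Topology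

/-- Iterate convergence: on a complete metric space, if `f` is lsc, proper, bounded below and
satisfies the KL property for minimization with a concave desingularizer `φ` (threshold `ρ`),
then there is `ε > 0` such that any sequence satisfying the slope-descent conditions
`f x_k - f x_{k+1} ≥ α·d(x_k,x_{k+1})²` and `d(x_k,x_{k+1}) ≥ β·|∇̄f|(x_{k+1})`
with initial gap `< ε` converges to a minimizer of `f`. -/
theorem iterate_convergence {X : Type*} [MetricSpace X] [CompleteSpace X]
    (f : X → EReal) (hlsc : LowerSemicontinuous f)
    (hproper : ∃ x, f x ≠ ⊤) (hnb : ∀ x, f x ≠ ⊥)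
    (hbdd : ∃ b : ℝ, ∀ x, (b : EReal) ≤ f x)
    (φ φ' : ℝ → ℝ)
    (hφc : ContinuousOn φ (Set.Ici 0)) (hφ0 : φ 0 = 0)
    (hφd : ∀ t > (0 : ℝ), HasDerivAt φ (φ' t) t)
    (hφ'c : ContinuousOn φ' (Set.Ioi 0))
    (hφ'pos : ∀ t > (0 : ℝ), 0 < φ' t)
    (hφconc : ConcaveOn ℝ (Set.Ici 0) φ)
    (ρ : ℝ) (hρ : 0 < ρ)
    (hKL : ∀ x : X, 0 < f x - sInf (Set.range f) → f x - sInf (Set.range f) < (ρ : EReal) →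
      (1 : EReal) ≤ ((φ' ((f x - sInf (Set.range f)).toReal) : ℝ) : EReal) * mLimSlope f x)
    (α β : ℝ) (hα : 0 < α) (hβ : 0 < β) :
    ∃ ε > (0 : ℝ), ∀ x : ℕ → X,
      (∀ k : ℕ, f (x (k+1)) + ((α * (dist (x k) (x (k+1))) ^ 2 : ℝ) : EReal) ≤ f (x k)) →
      (∀ k : ℕ, (β : EReal) * mLimSlope f (x (k+1)) ≤ ((dist (x k) (x (k+1)) : ℝ) : EReal)) →
      f (x 0) < sInf (Set.range f) + (ε : EReal) →
      ∃ xstar : X, Tendsto x atTop (nhds xstar) ∧ ∀ y : X, f xstar ≤ f y := by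
  obtain ⟨xbar, hxbar⟩ := hproper
  obtain ⟨b, hb⟩ := hbdd
  set m : EReal := sInf (Set.range f) with hm
  have hmb : (b : EReal) ≤ m := le_sInf (by rintro _ ⟨y, rfl⟩; exact hb y)
  have hmle : ∀ y, m ≤ f y := fun y => sInf_le ⟨y, rfl⟩
  have hmt : m ≠ ⊤ := fun h => hxbar (top_le_iff.mp (h ▸ hmle xbar))
  have hmbot : m ≠ ⊥ := fun h => by simp [h] at hmb
  set M : ℝ := m.toReal with hM
  have hmM : m = (M : EReal) := (EReal.coe_toReal hmt hmbot).symm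
  refine ⟨ρ, hρ, ?_⟩
  intro x hdesc hslope hinit
  set d : ℕ → ℝ := fun k => dist (x k) (x (k+1)) with hd
  have hd0 : ∀ k, 0 ≤ d k := fun k => dist_nonneg
  have hmono : ∀ k, f (x (k+1)) ≤ f (x k) := by
    intro k
    refine le_trans (le_add_of_nonneg_right ?_) (hdesc k)
    exact EReal.coe_nonneg.mpr (by positivity)
  have hmono' : Antitone (fun k => f (x k)) := antitone_nat_of_succ_le hmono
  have htop : ∀ k, f (x k) ≠ ⊤ := by
    intro k h
    have h1 : f (x k) ≤ f (x 0) := hmono' (Nat.zero_le k)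
    have h2 : f (x 0) < m + (ρ : EReal) := hinit
    rw [h] at h1
    rw [top_le_iff.mp h1, hmM, ← EReal.coe_add] at h2
    exact not_top_lt h2
  set g : ℕ → ℝ := fun k => (f (x k)).toReal - M with hg
  have hfxk : ∀ k, f (x k) = ((g k + M : ℝ) : EReal) := by
    intro k
    simp only [hg, sub_add_cancel]
    exact (EReal.coe_toReal (htop k) (hnb _)).symm
  have hg0 : ∀ k, 0 ≤ g k := by
    intro k
    have h := EReal.toReal_le_toReal (hmle (x k)) hmbot (htop k)
    simp only [hg]
    rw [hM]
    linarith
  have hgd : ∀ k, g (k+1) + α * d k ^ 2 ≤ g k := by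
    intro k
    have h := hdesc k
    rw [hfxk k, hfxk (k+1), ← EReal.coe_add, EReal.coe_le_coe_iff] at h
    simp only [hd]
    linarith
  have hginit : g 0 < ρ := by
    have h := hinit
    rw [hfxk 0, hmM, ← EReal.coe_add, EReal.coe_lt_coe_iff] at h
    linarith
  have hgmono : Antitone g := by
    apply antitone_nat_of_succ_le
    intro k
    nlinarith [hgd k, sq_nonneg (d k), mul_nonneg hα.le (sq_nonneg (d k))]
  have hglt : ∀ k, g k < ρ := fun k => lt_of_le_of_lt (hgmono (Nat.zero_le k)) hginit
  have hkey : ∀ k, 0 < g (k+1) → β ≤ φ' (g (k+1)) * d k := by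
    intro k hgk
    have hgap : f (x (k+1)) - m = ((g (k+1) : ℝ) : EReal) := by
      rw [hfxk (k+1), hmM, ← EReal.coe_sub]
      norm_num
    have h1 := hKL (x (k+1)) (by rw [hgap]; exact_mod_cast hgk)
      (by rw [hgap]; exact_mod_cast hglt (k+1))
    rw [hgap, EReal.toReal_coe] at h1
    have h2 := hslope k
    set L := mLimSlope f (x (k+1)) with hL
    have hc : 0 < φ' (g (k+1)) := hφ'pos _ hgk
    have hLbot : L ≠ ⊥ := by
      intro h
      rw [h, EReal.coe_mul_bot_of_pos hc] at h1
      rw [le_bot_iff, ← EReal.coe_one] at h1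
      exact EReal.coe_ne_bot 1 h1
    have hLtop : L ≠ ⊤ := by
      intro h
      rw [h, EReal.coe_mul_top_of_pos hβ] at h2
      exact absurd h2 (by simp)
    set l : ℝ := L.toReal with hl
    have hLl : L = (l : EReal) := (EReal.coe_toReal hLtop hLbot).symm
    rw [hLl, ← EReal.coe_mul] at h1 h2
    have h1' : (1 : ℝ) ≤ φ' (g (k+1)) * l := by exact_mod_cast h1
    have h2' : β * l ≤ dist (x k) (x (k+1)) := by exact_mod_cast h2
    simp only [hd]
    nlinarith [mul_le_mul_of_nonneg_left h2' hc.le, mul_le_mul_of_nonneg_left h1' hβ.le]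
  by_cases hA : ∀ k, 0 < g k
  · -- main case: the gap is always strictly positive
    have hβd : ∀ k, β ≤ φ' (g (k+1)) * d k := fun k => hkey k (hA (k+1))
    have hφ'g : ∀ k, 0 < φ' (g k) := fun k => hφ'pos _ (hA k)
    have hdpos : ∀ k, 0 < d k := by
      intro k
      nlinarith [hβd k, hφ'g (k+1), hd0 k]
    have hgstrict : ∀ k, g (k+1) < g k := by
      intro k
      nlinarith [hgd k, mul_pos hα (pow_pos (hdpos k) 2)]
    have htangent : ∀ k, φ' (g (k+1)) * (g (k+1) - g (k+2)) ≤ φ (g (k+1)) - φ (g (k+2)) := by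
      intro k
      have hs := hφconc.le_slope_of_hasDerivAt (Set.mem_Ici.mpr (hg0 (k+2)))
        (Set.mem_Ici.mpr (hg0 (k+1))) (hgstrict (k+1)) (hφd _ (hA (k+1)))
      rw [slope_def_field] at hs
      have hpos : 0 < g (k+1) - g (k+2) := sub_pos.mpr (hgstrict (k+1))
      rw [le_div_iff₀ hpos] at hs
      linarith
    have hrec : ∀ k, d (k+1) ≤ d k / 2 + (φ (g (k+1)) - φ (g (k+2))) / (2*α*β) := by
      intro k
      have h1 := hgd (k+1)
      have h2 := htangent k
      have h3 := hβd k
      set c := φ' (g (k+1))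
      have hc : 0 < c := hφ'g (k+1)
      have hG : α * d (k+1) ^ 2 ≤ g (k+1) - g (k+2) := by linarith
      have hG0 : 0 ≤ g (k+1) - g (k+2) := le_trans (by positivity) hG
      have hΔ0 : 0 ≤ φ (g (k+1)) - φ (g (k+2)) := le_trans (mul_nonneg hc.le hG0) h2
      have hΔ : α * β * d (k+1) ^ 2 ≤ d k * (φ (g (k+1)) - φ (g (k+2))) := by
        nlinarith [mul_le_mul_of_nonneg_left hG hβ.le, mul_le_mul_of_nonneg_left hG hc.le,
          mul_le_mul_of_nonneg_right h3 (mul_nonneg hα.le (sq_nonneg (d (k+1)))),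
          mul_le_mul_of_nonneg_left h2 (hd0 k)]
      have hab : (0:ℝ) < α * β := mul_pos hα hβ
      set u := (φ (g (k+1)) - φ (g (k+2))) / (α*β) with hu
      have hu0 : 0 ≤ u := div_nonneg hΔ0 hab.le
      have hx2 : d (k+1)^2 ≤ d k * u := by
        have huu : d k * u = (d k * (φ (g (k+1)) - φ (g (k+2))))/(α*β) := by
          rw [hu]; ring
        rw [huu, le_div_iff₀ hab]
        nlinarith [hΔ]
      have hfinal : d (k+1) ≤ d k / 2 + u / 2 := by
        nlinarith [sq_nonneg (d k - u), hd0 (k+1), hd0 k, hu0, hx2]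
      have hue : u/2 = (φ (g (k+1)) - φ (g (k+2))) / (2*α*β) := by
        rw [hu, div_div]
        ring_nf
      linarith
    have hφnn : ∀ t, 0 ≤ t → 0 ≤ φ t := by
      intro t ht
      rcases eq_or_lt_of_le ht with h | h
      · rw [← h, hφ0]
      · have hsm : StrictMonoOn φ (Set.Ici 0) := by
          apply strictMonoOn_of_deriv_pos (convex_Ici 0) hφc
          intro s hs
          rw [interior_Ici] at hs
          rw [(hφd s hs).deriv]
          exact hφ'pos s hs
        have h2 := hsm Set.self_mem_Ici (Set.mem_Ici.mpr ht) h
        rw [hφ0] at h2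
        exact h2.le
    have hab : (0:ℝ) < α * β := mul_pos hα hβ
    have hsum : ∀ N, ∑ k ∈ Finset.range N, d k ≤ 2 * d 0 + φ (g 1) / (α*β) := by
      intro N
      match N with
      | 0 =>
        simp only [Finset.range_zero, Finset.sum_empty]
        have h5 := hφnn (g 1) (hg0 1)
        positivity
      | (N+1) =>
        have e1 : ∑ k ∈ Finset.range (N+1), d k
            = (∑ k ∈ Finset.range N, d (k+1)) + d 0 := Finset.sum_range_succ' d N
        have e2 : ∑ k ∈ Finset.range N, d (k+1)
            ≤ (∑ k ∈ Finset.range N, d k) / 2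
              + (∑ k ∈ Finset.range N, (φ (g (k+1)) - φ (g (k+2)))) / (2*α*β) := by
          rw [Finset.sum_div, Finset.sum_div, ← Finset.sum_add_distrib]
          exact Finset.sum_le_sum fun k _ => hrec k
        have e3 : (∑ k ∈ Finset.range N, (φ (g (k+1)) - φ (g (k+2)))) = φ (g 1) - φ (g (N+1)) :=
          Finset.sum_range_sub' (fun k => φ (g (k+1))) N
        have e4 : ∑ k ∈ Finset.range N, d k ≤ ∑ k ∈ Finset.range (N+1), d k := by
          rw [Finset.sum_range_succ]
          exact le_add_of_nonneg_right (hd0 N)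
        have e5 : 0 ≤ φ (g (N+1)) := hφnn _ (hg0 (N+1))
        have e6 : (φ (g 1) - φ (g (N+1)))/(2*α*β) ≤ φ (g 1)/(2*α*β) :=
          (div_le_div_iff_of_pos_right (by positivity)).mpr (by linarith)
        have e7 : φ (g 1)/(α*β) = 2*(φ (g 1)/(2*α*β)) := by
          field_simp
        rw [e3] at e2
        linarith
    have hsummable : Summable d := summable_of_sum_range_le hd0 hsum
    have hcauchy : CauchySeq x := cauchySeq_of_summable_dist hsummable
    obtain ⟨xstar, hxstar⟩ := cauchySeq_tendsto_of_complete hcauchy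
    have hdlim : Tendsto d atTop (nhds 0) := hsummable.tendsto_atTop_zero
    have hbdd' : BddBelow (Set.range g) := ⟨0, by rintro _ ⟨k, rfl⟩; exact hg0 k⟩
    set Λ : ℝ := ⨅ k, g k with hΛdef
    have hgL : Tendsto g atTop (nhds Λ) := tendsto_atTop_ciInf hgmono hbdd'
    have hΛ0 : 0 ≤ Λ := le_ciInf hg0
    have hΛ : Λ = 0 := by
      by_contra hne
      have hΛpos : 0 < Λ := hΛ0.lt_of_ne (Ne.symm hne)
      have hconc' : ConcaveOn ℝ (Set.Ioi 0) φ :=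
        hφconc.subset Set.Ioi_subset_Ici_self (convex_Ioi 0)
      have hanti : AntitoneOn (deriv φ) (Set.Ioi 0) :=
        hconc'.antitoneOn_deriv (fun s hs => (hφd s hs).differentiableAt)
      have hanti' : ∀ s t : ℝ, 0 < s → s ≤ t → φ' t ≤ φ' s := by
        intro s t hs hst
        have h := hanti (Set.mem_Ioi.mpr hs) (Set.mem_Ioi.mpr (lt_of_lt_of_le hs hst)) hst
        rwa [(hφd s hs).deriv, (hφd t (lt_of_lt_of_le hs hst)).deriv] at h
      have hc : 0 < φ' Λ := hφ'pos Λ hΛpos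
      have hlow : ∀ k, β / φ' Λ ≤ d k := by
        intro k
        have h1 := hβd k
        have h2 : φ' (g (k+1)) ≤ φ' Λ := hanti' Λ (g (k+1)) hΛpos (ciInf_le hbdd' (k+1))
        rw [div_le_iff₀ hc]
        calc β ≤ φ' (g (k+1)) * d k := h1
          _ ≤ φ' Λ * d k := mul_le_mul_of_nonneg_right h2 (hd0 k)
          _ = d k * φ' Λ := mul_comm _ _
      have hev := hdlim.eventually_lt_const (div_pos hβ hc)
      obtain ⟨k, hk⟩ := hev.exists
      exact absurd (hlow k) (not_le.mpr hk)
    have hgzero : Tendsto g atTop (nhds 0) := hΛ ▸ hgL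
    refine ⟨xstar, hxstar, ?_⟩
    have hfx : f xstar ≤ m := by
      by_contra hlt
      push_neg at hlt
      obtain ⟨c, hc1, hc2⟩ := exists_between hlt
      have hcbot : c ≠ ⊥ := fun h => by rw [h] at hc1; exact not_lt_bot hc1
      have hctop : c ≠ ⊤ := (lt_of_lt_of_le hc2 le_top).ne
      set cr := c.toReal with hcr
      have hcc : c = (cr : EReal) := (EReal.coe_toReal hctop hcbot).symm
      have hMc : M < cr := by
        rw [hmM, hcc, EReal.coe_lt_coe_iff] at hc1
        exact hc1
      have hev1 : ∀ᶠ k in atTop, c < f (x k) := hxstar.eventually (hlsc xstar c hc2)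
      have hev2 : ∀ᶠ k in atTop, g k < cr - M :=
        hgzero.eventually_lt_const (by linarith)
      obtain ⟨k, h1, h2⟩ := (hev1.and hev2).exists
      rw [hfxk k, hcc, EReal.coe_lt_coe_iff] at h1
      linarith
    exact fun y => le_trans hfx (hmle y)
  · -- trivial case: the infimum is attained along the sequence
    push_neg at hA
    obtain ⟨K, hK⟩ := hA
    have hgK : g K = 0 := le_antisymm hK (hg0 K)
    have hconst : ∀ j, g (K + j) = 0 ∧ x (K + j) = x K := by
      intro j
      induction j with
      | zero => exact ⟨hgK, rfl⟩
      | succ n ih =>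
        have h1 := hgd (K + n)
        have h2 := hg0 (K + n + 1)
        have h3 : g (K + n) = 0 := ih.1
        have h4 : α * d (K+n)^2 ≤ 0 := by linarith
        have h5 : (0:ℝ) ≤ α * d (K+n)^2 := by positivity
        have h6 : d (K+n)^2 = 0 := by
          have := le_antisymm h4 h5
          exact (mul_eq_zero.mp this).resolve_left hα.ne'
        have hd' : d (K+n) = 0 := by
          exact pow_eq_zero_iff (by norm_num) |>.mp h6
        have hx' : x (K + n + 1) = x (K + n) := by
          have hdd : dist (x (K+n)) (x (K+n+1)) = 0 := hd'
          rw [dist_comm] at hdd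
          exact dist_eq_zero.mp hdd
        refine ⟨?_, ?_⟩
        · show g (K + n + 1) = 0
          nlinarith [h1, h2, h6]
        · show x (K + n + 1) = x K
          rw [hx', ih.2]
    refine ⟨x K, ?_, ?_⟩
    · apply Tendsto.congr' _ tendsto_const_nhds
      filter_upwards [eventually_ge_atTop K] with i hi
      obtain ⟨j, rfl⟩ := Nat.exists_eq_add_of_le hi
      exact ((hconst j).2).symm
    · intro y
      have hfK : f (x K) = m := by
        rw [hfxk K, hgK, hmM]
        norm_num
      rw [hfK]
      exact hmle y
end

section
/- In the MM setting, for any MM sequence (x_k) (i.e., x_{k+1} ∈ argmin_{D(x_k)} h_{x_k}), the interlacing f(x_k) ≥ F(x_k) ≥ f(x_{k+1}) holds for all k; consequently (x_k) is a minimizing sequence for f if and only if it is a minimizing sequence for F. -/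
open Filter Topology

/-! Majorization gives `f x_{k+1} ≤ h_{x_k} x_{k+1} = F x_k` and tangency gives `F x_k ≤ h_{x_k} x_k = f x_k`,
so `(F x_k)` is squeezed between two shifts of `(f x_k)`. Since moreover `inf F = inf f`, both sequences
converge to the common infimum or neither does. -/

theorem tendsto_nhds_iff_of_interlaced {α : Type*} [TopologicalSpace α] [Preorder α]
    [OrderTopology α] {a b : ℕ → α} {l : α} (hab : ∀ k, a (k + 1) ≤ b k) (hba : ∀ k, b k ≤ a k)
    (hla : ∀ k, l ≤ a k) :
    Tendsto a atTop (𝓝 l) ↔ Tendsto b atTop (𝓝 l) := by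
  constructor
  · intro ha
    exact tendsto_of_tendsto_of_tendsto_of_le_of_le ((tendsto_add_atTop_iff_nat 1).mpr ha) ha hab hba
  · intro hb
    refine (tendsto_add_atTop_iff_nat 1).mp ?_
    exact tendsto_of_tendsto_of_tendsto_of_le_of_le tendsto_const_nhds hb (fun k => hla _) hab

section Envelope

variable {X : Type*} {f : X → ℝ} {D : X → Set X} {h : X → X → ℝ}

/-- Valued in `EReal`: in `ℝ` the infimum of a model unbounded below on `D x` would be the junk `0`. -/
noncomputable def mmEnvelope (D : X → Set X) (h : X → X → ℝ) (x : X) : EReal :=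
  ⨅ y : D x, (h x y : EReal)

theorem mmEnvelope_le (hmem : ∀ x, x ∈ D x) (heq : ∀ x, h x x = f x) (x : X) :
    mmEnvelope D h x ≤ f x :=
  (iInf_le _ (⟨x, hmem x⟩ : D x)).trans_eq (by rw [heq])

theorem coe_le_mmEnvelope (hmaj : ∀ x, ∀ y ∈ D x, f y ≤ h x y) {x x' : X} (hx' : x' ∈ D x)
    (hmin : IsMinOn (h x) (D x) x') :
    (f x' : EReal) ≤ mmEnvelope D h x :=
  le_iInf fun y => EReal.coe_le_coe_iff.mpr ((hmaj x x' hx').trans (isMinOn_iff.mp hmin y y.2))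

theorem iInf_mmEnvelope (hmem : ∀ x, x ∈ D x) (hmaj : ∀ x, ∀ y ∈ D x, f y ≤ h x y)
    (heq : ∀ x, h x x = f x) :
    ⨅ x, mmEnvelope D h x = ⨅ x, (f x : EReal) :=
  le_antisymm (iInf_mono (mmEnvelope_le hmem heq))
    (le_iInf fun x => le_iInf fun y =>
      (iInf_le _ (y : X)).trans (EReal.coe_le_coe_iff.mpr (hmaj x y y.2)))

end Envelope

/-- MM sequences interlace: `f(x_k) ≥ F(x_k) ≥ f(x_{k+1})` where `F x = inf_{D x} (h x)`;
consequently an MM sequence is minimizing for `f` iff it is minimizing for `F`. -/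
theorem mm_interlacing {X : Type*} (f : X → ℝ) (D : X → Set X) (h : X → X → ℝ)
    (hmem : ∀ x, x ∈ D x)
    (hmaj : ∀ x, ∀ y ∈ D x, f y ≤ h x y)
    (heq : ∀ x, h x x = f x)
    (x : ℕ → X)
    (hMM : ∀ k : ℕ, x (k+1) ∈ D (x k) ∧ ∀ y ∈ D (x k), h (x k) (x (k+1)) ≤ h (x k) y) :
    (∀ k : ℕ, (f (x (k+1)) : EReal) ≤ (⨅ y : D (x k), (h (x k) y : EReal)) ∧
        (⨅ y : D (x k), (h (x k) y : EReal)) ≤ (f (x k) : EReal)) ∧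
      (Tendsto (fun k => (f (x k) : EReal)) atTop (nhds (⨅ z : X, (f z : EReal))) ↔
        Tendsto (fun k => ⨅ y : D (x k), (h (x k) y : EReal)) atTop
          (nhds (⨅ z : X, ⨅ y : D z, (h z y : EReal)))) := by
  have interlace : ∀ k, (f (x (k + 1)) : EReal) ≤ mmEnvelope D h (x k) ∧
      mmEnvelope D h (x k) ≤ f (x k) := fun k =>
    ⟨coe_le_mmEnvelope hmaj (hMM k).1 (isMinOn_iff.mpr (hMM k).2), mmEnvelope_le hmem heq _⟩
  refine ⟨interlace, ?_⟩
  change _ ↔ Tendsto (fun k => mmEnvelope D h (x k)) atTop (𝓝 (⨅ z, mmEnvelope D h z))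
  rw [iInf_mmEnvelope hmem hmaj heq]
  exact tendsto_nhds_iff_of_interlaced (fun k => (interlace k).1) (fun k => (interlace k).2)
    (fun k => iInf_le _ (x k))
end

section
/- In the MM setting, if x minimizes the envelope F and y ∈ argmin_{D(x)} h_x, then y minimizes the objective f; if moreover h_x(z) > f(z) for all z ∈ D(x) with z ≠ x, then y = x. -/
/-- If `x` minimizes the MM envelope `F` (where `F z = inf_{D z} (h z)`) and
`y ∈ argmin_{D x} (h x)`, then `y` minimizes the objective `f`; if moreover the model strictly
dominates `f` on `D x` away from `x`, then `y = x`. -/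
theorem mm_fixed_point {X : Type*} (f : X → ℝ) (D : X → Set X) (h : X → X → ℝ)
    (hmem : ∀ x, x ∈ D x)
    (hmaj : ∀ x, ∀ y ∈ D x, f y ≤ h x y)
    (heq : ∀ x, h x x = f x)
    (hbdd : ∃ b : ℝ, ∀ z, b ≤ f z)
    (x : X) (hxmin : ∀ z : X, (⨅ y : D x, (h x y : EReal)) ≤ ⨅ y : D z, (h z y : EReal))
    (y : X) (hyD : y ∈ D x) (hymin : ∀ z ∈ D x, h x y ≤ h x z) :
    (∀ z : X, f y ≤ f z) ∧
      ((∀ z ∈ D x, z ≠ x → f z < h x z) → y = x) := by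
  -- key: h x y ≤ f z for every z
  have key : ∀ z : X, h x y ≤ f z := by
    intro z
    have h1 : (h x y : EReal) ≤ ⨅ w : D x, (h x w : EReal) := by
      refine le_iInf fun w => ?_
      exact_mod_cast hymin w w.2
    have h2 : (⨅ w : D z, (h z w : EReal)) ≤ (h z z : EReal) :=
      iInf_le _ (⟨z, hmem z⟩ : D z)
    have := h1.trans ((hxmin z).trans h2)
    rw [heq] at this
    exact_mod_cast this
  have hmin : ∀ z : X, f y ≤ f z := fun z => (hmaj x y hyD).trans (key z)
  refine ⟨hmin, fun hstrict => ?_⟩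
  by_contra hne
  exact absurd (key y) (not_le.mpr (hstrict y hyD hne))
end

section
/- Let S₁, ..., S_m ⊂ ℝⁿ be closed convex sets each containing the closed ball of radius δ > 0 around the origin. Then for every x ∈ ℝⁿ, dist(x, ∩ᵢ Sᵢ) ≤ (‖x‖/δ)·maxᵢ dist(x, Sᵢ). -/
/-!
If `dist(x, Sᵢ) < d` for every `i`, pick `pᵢ ∈ Sᵢ` within `d` of `x`. The point `(δ/d)(x - pᵢ)` lies
in the ball of radius `δ`, hence in `Sᵢ`, and the convex combination of it with `pᵢ` that cancels
`pᵢ` is `λx` with `λ = δ/(δ + d)`, the same for every `i`. So `λx` lies in the intersection, at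
distance `(d/(δ + d))‖x‖ ≤ (d/δ)‖x‖` from `x`; letting `d` decrease to `maxᵢ dist(x, Sᵢ)` gives the
bound.
-/

open Metric Filter Topology

section

variable {E : Type*} [NormedAddCommGroup E] [NormedSpace ℝ E]

theorem Convex.smul_mem_of_closedBall_subset {C : Set E} (hC : Convex ℝ C) {δ d : ℝ}
    (hδ : 0 < δ) (hd : 0 < d) (hball : closedBall 0 δ ⊆ C) {x p : E} (hp : p ∈ C)
    (hxp : dist x p ≤ d) : (δ / (δ + d)) • x ∈ C := by
  have hq : (δ / d) • (x - p) ∈ C := by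
    refine hball (mem_closedBall_zero_iff.2 ?_)
    rw [norm_smul, Real.norm_of_nonneg (by positivity), ← dist_eq_norm]
    calc δ / d * dist x p ≤ δ / d * d := by gcongr
      _ = δ := div_mul_cancel₀ δ hd.ne'
  have hcomb : (δ / (δ + d)) • p + (d / (δ + d)) • ((δ / d) • (x - p)) = (δ / (δ + d)) • x := by
    rw [smul_smul, show d / (δ + d) * (δ / d) = δ / (δ + d) by field_simp, ← smul_add,
      add_sub_cancel]
  rw [← hcomb]
  exact hC hp hq (by positivity) (by positivity) (by field_simp)

theorem infDist_iInter_le_of_closedBall_subset {ι : Type*} {S : ι → Set E}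
    (hconv : ∀ i, Convex ℝ (S i)) {δ d : ℝ} (hδ : 0 < δ) (hd : 0 < d)
    (hball : ∀ i, closedBall 0 δ ⊆ S i) {x : E} (hx : ∀ i, infDist x (S i) < d) :
    infDist x (⋂ i, S i) ≤ d / (δ + d) * ‖x‖ := by
  have hmem : (δ / (δ + d)) • x ∈ ⋂ i, S i := Set.mem_iInter.2 fun i => by
    obtain ⟨p, hp, hxp⟩ :=
      (infDist_lt_iff ⟨0, hball i (mem_closedBall_self hδ.le)⟩).1 (hx i)
    exact (hconv i).smul_mem_of_closedBall_subset hδ hd (hball i) hp hxp.le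
  have hcoef : d / (δ + d) = 1 - δ / (δ + d) := by field_simp; ring
  calc infDist x (⋂ i, S i) ≤ dist x ((δ / (δ + d)) • x) := infDist_le_dist_of_mem hmem
    _ = ‖(d / (δ + d)) • x‖ := by rw [dist_eq_norm, hcoef, sub_smul, one_smul]
    _ = d / (δ + d) * ‖x‖ := by rw [norm_smul, Real.norm_of_nonneg (by positivity)]

end

theorem dist_inter_le_general {n m : ℕ} (S : Fin m → Set (EuclideanSpace ℝ (Fin n)))
    (hconv : ∀ i, Convex ℝ (S i))
    (δ : ℝ) (hδ : 0 < δ) (hball : ∀ i, Metric.closedBall 0 δ ⊆ S i)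
    (x : EuclideanSpace ℝ (Fin n)) :
    Metric.infDist x (⋂ i, S i) ≤ (‖x‖ / δ) * ⨆ i, Metric.infDist x (S i) := by
  set D := ⨆ i, infDist x (S i)
  have hD : 0 ≤ D := Real.iSup_nonneg fun _ => infDist_nonneg
  have hbound : ∀ d > D, infDist x (⋂ i, S i) ≤ ‖x‖ / δ * d := fun d hd => by
    have hd0 : 0 < d := hD.trans_lt hd
    calc infDist x (⋂ i, S i) ≤ d / (δ + d) * ‖x‖ :=
          infDist_iInter_le_of_closedBall_subset hconv hδ hd0 hball fun i =>
            (le_ciSup (Set.finite_range _).bddAbove i).trans_lt hd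
      _ ≤ d / δ * ‖x‖ := by gcongr; linarith
      _ = ‖x‖ / δ * d := by ring
  have hlim : Tendsto (fun d => ‖x‖ / δ * d) (𝓝[>] D) (𝓝 (‖x‖ / δ * D)) :=
    ((continuous_const.mul continuous_id).tendsto D).mono_left nhdsWithin_le_nhds
  exact ge_of_tendsto hlim (eventually_nhdsWithin_of_forall hbound)

/-- If closed convex sets `S₁, …, S_m ⊂ ℝⁿ` each contain the closed ball of radius `δ > 0`
around the origin, then `dist(x, ∩ᵢ Sᵢ) ≤ (‖x‖/δ)·maxᵢ dist(x, Sᵢ)` for every `x`. -/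
theorem dist_inter_le {n m : ℕ} (hm : 0 < m) (S : Fin m → Set (EuclideanSpace ℝ (Fin n)))
    (hclosed : ∀ i, IsClosed (S i)) (hconv : ∀ i, Convex ℝ (S i))
    (δ : ℝ) (hδ : 0 < δ) (hball : ∀ i, Metric.closedBall 0 δ ⊆ S i)
    (x : EuclideanSpace ℝ (Fin n)) :
    Metric.infDist x (⋂ i, S i) ≤ (‖x‖ / δ) * ⨆ i, Metric.infDist x (S i) :=
  dist_inter_le_general S hconv δ hδ hball x
end
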